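/- arXiv:math/0507453 — 4 statements merged into one kernel-verified Lean document; each statement's English description precedes it below -/
import Mathlib

section
/- Let φ, S be smooth functions on [a,b], and suppose S attains its global minimum at an interior point ξ ∈ (a,b), with S(x) > S(ξ) for all x ≠ ξ, S'(ξ) = 0, and S''(ξ) > 0. Then as t → 0⁺, ∫_a^b φ(x) e^{-S(x)/t} dx = e^{-S(ξ)/t} · (φ(ξ)√(2π t / S''(ξ)) + o(√t)). -/
open Set Filter MeasureTheory Real

lemma taylor2 {S : ℝ → ℝ} {U : Set ℝ} (hU : IsOpen U) (hS : ContDiffOn ℝ (⊤ : ℕ∞) S U)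
    {ξ x : ℝ} (hI : Set.Icc ξ x ⊆ U) (hξx : ξ < x) :
    ∃ c ∈ Set.Ioo ξ x,
      S x - S ξ - deriv S ξ * (x - ξ) = deriv (deriv S) c * (x - ξ) ^ 2 / 2 := by
  have hud : UniqueDiffOn ℝ (Icc ξ x) := uniqueDiffOn_Icc hξx
  have hS' : ContDiffOn ℝ (⊤ : ℕ∞) (deriv S) U := hS.deriv_of_isOpen hU (by simp)
  have hdiff' : ∀ y ∈ U, DifferentiableAt ℝ (deriv S) y := fun y hy =>
    (hS'.contDiffAt (hU.mem_nhds hy)).differentiableAt (by simp)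
  have e1 : ∀ y ∈ Ioo ξ x, iteratedDerivWithin 1 S (Icc ξ x) y = deriv S y := by
    intro y hy
    rw [iteratedDerivWithin_one,
      derivWithin_of_mem_nhds (Icc_mem_nhds hy.1 hy.2)]
  have hf' : DifferentiableOn ℝ (iteratedDerivWithin 1 S (Icc ξ x)) (Ioo ξ x) := by
    refine DifferentiableOn.congr (f := deriv S) ?_ e1
    exact fun y hy => (hdiff' y (hI (Ioo_subset_Icc_self hy))).differentiableWithinAt
  obtain ⟨c, hc, hTay⟩ := taylor_mean_remainder_lagrange (n := 1) hξx.ne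
    (by rw [uIcc_of_le hξx.le]; exact ((hS.mono hI).of_le (by simp)))
    (by rw [uIcc_of_le hξx.le, uIoo_of_le hξx.le]; exact hf')
  rw [uIoo_of_le hξx.le] at hc
  rw [uIcc_of_le hξx.le] at hTay
  refine ⟨c, hc, ?_⟩
  have e2 : iteratedDerivWithin 2 S (Icc ξ x) c = deriv (deriv S) c := by
    rw [show (2:ℕ) = 1 + 1 from rfl, iteratedDerivWithin_succ,
      derivWithin_of_mem_nhds (Icc_mem_nhds hc.1 hc.2)]
    exact Filter.EventuallyEq.deriv_eq <|
      Filter.eventuallyEq_of_mem (isOpen_Ioo.mem_nhds hc) e1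
  have e3 : taylorWithinEval S 1 (Icc ξ x) ξ x = S ξ + deriv S ξ * (x - ξ) := by
    rw [taylorWithinEval_succ, taylor_within_zero_eval]
    simp only [zero_add, iteratedDerivWithin_one]
    rw [DifferentiableAt.derivWithin ?_ (hud ξ (left_mem_Icc.mpr hξx.le))]
    · simp [Nat.factorial, smul_eq_mul]; ring
    · exact ((hS.contDiffAt (hU.mem_nhds (hI (left_mem_Icc.mpr hξx.le)))).differentiableAt (by simp))
  rw [e3] at hTay
  rw [e2] at hTay
  norm_num at hTay
  linarith [hTay]

lemma taylor2' {S : ℝ → ℝ} {U : Set ℝ} (hU : IsOpen U) (hS : ContDiffOn ℝ (⊤ : ℕ∞) S U)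
    {ξ x : ℝ} (hI : Set.uIcc ξ x ⊆ U) (hne : x ≠ ξ) :
    ∃ c ∈ U, |c - ξ| < |x - ξ| ∧
      S x - S ξ - deriv S ξ * (x - ξ) = deriv (deriv S) c * (x - ξ) ^ 2 / 2 := by
  rcases hne.lt_or_gt with hlt | hlt
  · -- x < ξ
    have hV : IsOpen (Neg.neg ⁻¹' U : Set ℝ) := hU.preimage continuous_neg
    have hTc : ContDiffOn ℝ (⊤ : ℕ∞) (fun u => S (-u)) (Neg.neg ⁻¹' U) :=
      hS.comp contDiff_neg.contDiffOn (fun u hu => hu)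
    have hIcc : Set.Icc x ξ ⊆ U := by rwa [Set.uIcc_of_ge hlt.le] at hI
    have hsub : Set.Icc (-ξ) (-x) ⊆ (Neg.neg ⁻¹' U : Set ℝ) := by
      intro u hu
      simp only [Set.mem_preimage]
      exact hIcc ⟨by linarith [hu.2], by linarith [hu.1]⟩
    obtain ⟨c', hc', heq⟩ := taylor2 hV hTc hsub (by linarith)
    have hdT : deriv (fun u => S (-u)) = fun u => -deriv S (-u) :=
      funext fun u => deriv_comp_neg S u
    have hdT1 : deriv (fun u => S (-u)) (-ξ) = -deriv S ξ := by rw [hdT]; simp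
    have hdT2 : deriv (deriv (fun u => S (-u))) c' = deriv (deriv S) (-c') := by
      rw [hdT]
      rw [show (fun u => -deriv S (-u)) = fun u => -((fun v => deriv S (-v)) u) from rfl]
      rw [deriv.fun_neg, deriv_comp_neg, neg_neg]
    refine ⟨-c', hIcc ⟨by linarith [hc'.2], by linarith [hc'.1]⟩, ?_, ?_⟩
    · rw [abs_of_neg (by linarith [hc'.1, hc'.2] : -c' - ξ < 0),
        abs_of_neg (by linarith : x - ξ < 0)]
      linarith [hc'.1, hc'.2]
    · have : S x - S ξ - deriv S ξ * (x - ξ) = deriv (deriv S) (-c') * (-x - -ξ) ^ 2 / 2 := by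
        rw [← hdT2, ← heq, hdT1]; simp only [neg_neg]; ring
      rw [this]; ring_nf
  · obtain ⟨c, hc, heq⟩ := taylor2 hU hS (by rwa [Set.uIcc_of_le hlt.le] at hI) hlt
    refine ⟨c, (by rwa [Set.uIcc_of_le hlt.le] at hI : Set.Icc ξ x ⊆ U)
      (Set.Ioo_subset_Icc_self hc), ?_, heq⟩
    rw [abs_of_pos (by linarith [hc.1, hc.2] : (0:ℝ) < c - ξ),
      abs_of_pos (by linarith : (0:ℝ) < x - ξ)]
    linarith [hc.1, hc.2]

set_option maxHeartbeats 2000000 in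
theorem laplace_method_one_dim (a b : ℝ) (hab : a < b) (φ S : ℝ → ℝ)
    (hφ : ContDiffOn ℝ (⊤ : ℕ∞) φ (Set.Icc a b)) (hS : ContDiffOn ℝ (⊤ : ℕ∞) S (Set.Icc a b))
    (ξ : ℝ) (hξ : ξ ∈ Set.Ioo a b)
    (hmin : ∀ x ∈ Set.Icc a b, x ≠ ξ → S ξ < S x)
    (hS1 : deriv S ξ = 0) (hS2 : 0 < deriv (deriv S) ξ) :
    Tendsto (fun t : ℝ =>
        ((∫ x in a..b, φ x * Real.exp (-S x / t)) -
          Real.exp (-S ξ / t) *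
            (φ ξ * Real.sqrt (2 * Real.pi * t / deriv (deriv S) ξ))) /
        (Real.exp (-S ξ / t) * Real.sqrt t))
      (nhdsWithin 0 (Set.Ioi 0)) (nhds 0) := by
  set A := deriv (deriv S) ξ with hA
  have hSU : ContDiffOn ℝ (⊤ : ℕ∞) S (Ioo a b) := hS.mono Ioo_subset_Icc_self
  -- continuity of the second derivative at ξ
  have hS'' : ContinuousAt (deriv (deriv S)) ξ := by
    have hd1 : ContDiffOn ℝ (⊤ : ℕ∞) (deriv S) (Ioo a b) :=
      hSU.deriv_of_isOpen isOpen_Ioo (by simp)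
    have hd2 : ContDiffOn ℝ (⊤ : ℕ∞) (deriv (deriv S)) (Ioo a b) :=
      hd1.deriv_of_isOpen isOpen_Ioo (by simp)
    exact (hd2.continuousOn.continuousAt (isOpen_Ioo.mem_nhds hξ))
  -- Taylor with Lagrange remainder around ξ
  have key : ∀ x ∈ Ioo a b, x ≠ ξ → ∃ c, |c - ξ| < |x - ξ| ∧
      S x - S ξ = deriv (deriv S) c * (x - ξ) ^ 2 / 2 := by
    intro x hx hne
    have huIcc : Set.uIcc ξ x ⊆ Ioo a b :=
      Set.OrdConnected.uIcc_subset Set.ordConnected_Ioo hξ hx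
    obtain ⟨c, _, hlt, heq⟩ := taylor2' isOpen_Ioo hSU huIcc hne
    exact ⟨c, hlt, by rw [← heq, hS1]; ring⟩
  -- radius r around ξ where S'' > A/2
  obtain ⟨r, hr, hball⟩ : ∃ r > 0, ∀ c : ℝ, |c - ξ| ≤ r →
      A / 2 < deriv (deriv S) c ∧ c ∈ Ioo a b := by
    have h1 : ∀ᶠ c in nhds ξ, A / 2 < deriv (deriv S) c ∧ c ∈ Ioo a b := by
      have e1 : ∀ᶠ c in nhds ξ, A / 2 < deriv (deriv S) c :=
        hS''.eventually (eventually_gt_nhds (by linarith))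
      exact e1.and (eventually_of_mem (isOpen_Ioo.mem_nhds hξ) (fun c hc => hc))
    obtain ⟨ρ, hρ, hρball⟩ := Metric.eventually_nhds_iff.mp h1
    refine ⟨ρ / 2, by linarith, fun c hc => hρball ?_⟩
    rw [Real.dist_eq]
    linarith [hc]
  -- quadratic lower bound near ξ
  have hnear : ∀ x : ℝ, |x - ξ| ≤ r → A / 4 * (x - ξ) ^ 2 ≤ S x - S ξ := by
    intro x hx
    by_cases hxe : x = ξ
    · subst hxe; simp
    obtain ⟨c, hclt, heq⟩ := key x (hball x hx).2 hxe
    have hc2 := (hball c (hclt.le.trans hx)).1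
    rw [heq]
    nlinarith [sq_nonneg (x - ξ)]
  -- positive gap away from ξ
  obtain ⟨δ, hδ, hfar⟩ : ∃ δ > 0, ∀ x ∈ Icc a b, r ≤ |x - ξ| → δ ≤ S x - S ξ := by
    by_cases hK : (Icc a b ∩ {x : ℝ | r ≤ |x - ξ|}).Nonempty
    · have hcpt : IsCompact (Icc a b ∩ {x : ℝ | r ≤ |x - ξ|}) :=
        isCompact_Icc.inter_right
          (isClosed_le continuous_const ((continuous_id.sub continuous_const).abs))
      obtain ⟨x₀, hx₀, hmin'⟩ :=
        hcpt.exists_isMinOn hK (hS.continuousOn.mono Set.inter_subset_left)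
      refine ⟨S x₀ - S ξ, ?_, fun x hx hrx => ?_⟩
      · have hne : x₀ ≠ ξ := by
          intro h
          have := hx₀.2
          rw [h] at this
          simp at this
          linarith
        linarith [hmin x₀ hx₀.1 hne]
      · have := isMinOn_iff.mp hmin' x ⟨hx, hrx⟩
        linarith
    · exact ⟨1, one_pos, fun x hx hrx => absurd ⟨x, hx, hrx⟩ hK⟩
  -- uniform quadratic lower bound
  set κ := min (A / 4) (δ / (b - a) ^ 2) with hκdef
  have hκ : 0 < κ :=
    lt_min (by linarith) (div_pos hδ (pow_pos (sub_pos.mpr hab) 2))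
  have hquad : ∀ x ∈ Icc a b, κ * (x - ξ) ^ 2 ≤ S x - S ξ := by
    intro x hx
    by_cases h : |x - ξ| ≤ r
    · calc κ * (x - ξ) ^ 2 ≤ A / 4 * (x - ξ) ^ 2 :=
            mul_le_mul_of_nonneg_right (min_le_left _ _) (sq_nonneg _)
        _ ≤ S x - S ξ := hnear x h
    · push_neg at h
      have h1 : (x - ξ) ^ 2 ≤ (b - a) ^ 2 := by
        apply sq_le_sq'
        · have := hx.1; have := hξ.2; linarith
        · have := hx.2; have := hξ.1; linarith
      have h2 : κ ≤ δ / (b - a) ^ 2 := min_le_right _ _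
      have hba : (0:ℝ) < (b - a) ^ 2 := pow_pos (sub_pos.mpr hab) 2
      calc κ * (x - ξ) ^ 2 ≤ (δ / (b - a) ^ 2) * (b - a) ^ 2 :=
            mul_le_mul h2 h1 (sq_nonneg _) (div_nonneg hδ.le hba.le)
        _ = δ := div_mul_cancel₀ _ hba.ne'
        _ ≤ S x - S ξ := hfar x hx h.le
  -- bound on φ
  obtain ⟨M, hM0, hM⟩ : ∃ M ≥ 0, ∀ x ∈ Icc a b, |φ x| ≤ M := by
    obtain ⟨M, hM⟩ := isCompact_Icc.exists_bound_of_continuousOn hφ.continuousOn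
    exact ⟨max M 0, le_max_right _ _, fun x hx => (hM x hx).trans (le_max_left _ _)⟩
  -- the rescaled functions
  set g : ℝ → ℝ → ℝ := fun t y =>
    φ (Real.sqrt t * y + ξ) * Real.exp (-(S (Real.sqrt t * y + ξ) - S ξ) / t) with hgdef
  set G : ℝ → ℝ → ℝ := fun t =>
    (Ioc ((a - ξ) / Real.sqrt t) ((b - ξ) / Real.sqrt t)).indicator (g t) with hGdef
  have hmem : ∀ t : ℝ, 0 < t → ∀ y ∈ Ioc ((a - ξ) / Real.sqrt t) ((b - ξ) / Real.sqrt t),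
      Real.sqrt t * y + ξ ∈ Icc a b := by
    intro t ht y hy
    have hs : 0 < Real.sqrt t := Real.sqrt_pos.mpr ht
    have h1 : a - ξ < y * Real.sqrt t := (div_lt_iff₀ hs).mp hy.1
    have h2 : y * Real.sqrt t ≤ b - ξ := (le_div_iff₀ hs).mp hy.2
    constructor <;> nlinarith [mul_comm y (Real.sqrt t)]
  -- dominated convergence
  have hDCT : Tendsto (fun t => ∫ y : ℝ, G t y) (nhdsWithin 0 (Set.Ioi 0))
      (nhds (∫ y : ℝ, φ ξ * Real.exp (-(A / 2) * y ^ 2))) := by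
    refine MeasureTheory.tendsto_integral_filter_of_dominated_convergence
      (fun y => M * Real.exp (-κ * y ^ 2)) ?_ ?_ ?_ ?_
    · -- measurability
      filter_upwards [eventually_mem_nhdsWithin] with t ht
      have ht : (0:ℝ) < t := ht
      have hcont_aff : Continuous (fun y : ℝ => Real.sqrt t * y + ξ) := by continuity
      have hmaps : Set.MapsTo (fun y => Real.sqrt t * y + ξ)
          (Ioc ((a - ξ) / Real.sqrt t) ((b - ξ) / Real.sqrt t)) (Icc a b) :=
        fun y hy => hmem t ht y hy
      rw [hGdef]
      rw [aestronglyMeasurable_indicator_iff measurableSet_Ioc]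
      refine ContinuousOn.aestronglyMeasurable ?_ measurableSet_Ioc
      apply ContinuousOn.mul
      · exact hφ.continuousOn.comp hcont_aff.continuousOn hmaps
      · refine Real.continuous_exp.comp_continuousOn ?_
        exact (((hS.continuousOn.comp hcont_aff.continuousOn hmaps).sub
          continuousOn_const).neg).div_const t
    · -- bound
      filter_upwards [eventually_mem_nhdsWithin] with t ht
      have ht : (0:ℝ) < t := ht
      refine Eventually.of_forall fun y => ?_
      by_cases hy : y ∈ Ioc ((a - ξ) / Real.sqrt t) ((b - ξ) / Real.sqrt t)
      · rw [hGdef]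
        simp only [Set.indicator_of_mem hy]
        have hx : Real.sqrt t * y + ξ ∈ Icc a b := hmem t ht y hy
        have hq := hquad _ hx
        have hxx : Real.sqrt t * y + ξ - ξ = Real.sqrt t * y := by ring
        rw [hxx, mul_pow, Real.sq_sqrt ht.le] at hq
        have hexp : Real.exp (-(S (Real.sqrt t * y + ξ) - S ξ) / t) ≤
            Real.exp (-κ * y ^ 2) := by
          rw [Real.exp_le_exp, neg_div, neg_mul, neg_le_neg_iff]
          rw [le_div_iff₀ ht]
          nlinarith
        rw [hgdef]
        calc ‖φ (Real.sqrt t * y + ξ) * Real.exp (-(S (Real.sqrt t * y + ξ) - S ξ) / t)‖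
            = |φ (Real.sqrt t * y + ξ)| * Real.exp (-(S (Real.sqrt t * y + ξ) - S ξ) / t) := by
              rw [Real.norm_eq_abs, abs_mul, Real.abs_exp]
          _ ≤ M * Real.exp (-κ * y ^ 2) :=
              mul_le_mul (hM _ hx) hexp (Real.exp_pos _).le hM0
      · rw [hGdef]
        simp only [Set.indicator_of_notMem hy]
        simp only [norm_zero]
        positivity
    · exact (integrable_exp_neg_mul_sq hκ).const_mul M
    · -- pointwise convergence
      refine Eventually.of_forall fun y => ?_
      have hsqt : Tendsto (fun t : ℝ => Real.sqrt t * y) (nhdsWithin 0 (Set.Ioi 0)) (nhds 0) := by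
        have h0 : Tendsto Real.sqrt (nhds 0) (nhds 0) := by
          simpa using (Real.continuous_sqrt.tendsto 0)
        simpa using (h0.mono_left nhdsWithin_le_nhds).mul_const y
      have hEv : ∀ᶠ t in nhdsWithin 0 (Set.Ioi 0), G t y = g t y := by
        have hmemIoo : ∀ᶠ t in nhdsWithin 0 (Set.Ioi 0),
            Real.sqrt t * y ∈ Ioo (a - ξ) (b - ξ) :=
          hsqt.eventually_mem (Ioo_mem_nhds (by linarith [hξ.1]) (by linarith [hξ.2]))
        filter_upwards [hmemIoo, eventually_mem_nhdsWithin] with t htm ht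
        have hs : 0 < Real.sqrt t := Real.sqrt_pos.mpr ht
        have hyin : y ∈ Ioc ((a - ξ) / Real.sqrt t) ((b - ξ) / Real.sqrt t) :=
          ⟨(div_lt_iff₀ hs).mpr (by rw [mul_comm]; exact htm.1),
           (le_div_iff₀ hs).mpr (by rw [mul_comm]; exact htm.2.le)⟩
        rw [hGdef]
        exact Set.indicator_of_mem hyin _
      refine Tendsto.congr' (hEv.mono fun t h => h.symm) ?_
      have hxt : Tendsto (fun t : ℝ => Real.sqrt t * y + ξ) (nhdsWithin 0 (Set.Ioi 0))
          (nhds ξ) := by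
        simpa using hsqt.add_const ξ
      have hφt : Tendsto (fun t : ℝ => φ (Real.sqrt t * y + ξ)) (nhdsWithin 0 (Set.Ioi 0))
          (nhds (φ ξ)) :=
        ((hφ.continuousOn.continuousAt (Icc_mem_nhds hξ.1 hξ.2)).tendsto).comp hxt
      have hratio : Tendsto (fun t : ℝ => (S (Real.sqrt t * y + ξ) - S ξ) / t)
          (nhdsWithin 0 (Set.Ioi 0)) (nhds (A / 2 * y ^ 2)) := by
        by_cases hy0 : y = 0
        · subst hy0
          simp only [mul_zero, zero_add, sub_self, zero_div, ne_eq, OfNat.ofNat_ne_zero,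
            not_false_eq_true, zero_pow]
          exact tendsto_const_nhds
        rw [Metric.tendsto_nhdsWithin_nhds]
        intro ε hε
        have hε' : 0 < ε / (y ^ 2 / 2 + 1) := div_pos hε (by positivity)
        obtain ⟨ρ, hρ, hρb⟩ := Metric.continuousAt_iff.mp hS'' _ hε'
        have hm : 0 < min ρ r := lt_min hρ hr
        refine ⟨(min ρ r / (|y| + 1)) ^ 2, by positivity, ?_⟩
        intro t hts hdist
        have ht : 0 < t := hts
        have hst : Real.sqrt t < min ρ r / (|y| + 1) := by
          rw [Real.dist_eq, sub_zero, abs_of_pos ht] at hdist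
          calc Real.sqrt t < Real.sqrt ((min ρ r / (|y| + 1)) ^ 2) :=
                Real.sqrt_lt_sqrt ht.le hdist
            _ = min ρ r / (|y| + 1) := Real.sqrt_sq (by positivity)
        have hsy : Real.sqrt t * |y| < min ρ r := by
          have h2 : Real.sqrt t * |y| ≤ Real.sqrt t * (|y| + 1) := by
            nlinarith [Real.sqrt_nonneg t]
          have h3 : Real.sqrt t * (|y| + 1) < (min ρ r / (|y| + 1)) * (|y| + 1) :=
            mul_lt_mul_of_pos_right hst (by positivity)
          have h4 : (min ρ r / (|y| + 1)) * (|y| + 1) = min ρ r :=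
            div_mul_cancel₀ _ (by positivity)
          linarith
        have hxξ : |Real.sqrt t * y + ξ - ξ| = Real.sqrt t * |y| := by
          rw [show Real.sqrt t * y + ξ - ξ = Real.sqrt t * y by ring, abs_mul,
            abs_of_nonneg (Real.sqrt_nonneg t)]
        have hxr : |Real.sqrt t * y + ξ - ξ| ≤ r := by
          rw [hxξ]; exact hsy.le.trans (min_le_right _ _)
        have hxne : Real.sqrt t * y + ξ ≠ ξ := by
          intro h
          apply hy0
          have h5 : Real.sqrt t * y = 0 := by linarith [congrArg (· - ξ) h, h] 
          rcases mul_eq_zero.mp h5 with h6 | h6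
          · exact absurd h6 (Real.sqrt_pos.mpr ht).ne'
          · exact h6
        obtain ⟨c, hclt, heq⟩ := key _ (hball _ hxr).2 hxne
        have hSc : |deriv (deriv S) c - A| < ε / (y ^ 2 / 2 + 1) := by
          have hcρ : dist c ξ < ρ := by
            rw [Real.dist_eq]
            calc |c - ξ| < |Real.sqrt t * y + ξ - ξ| := hclt
              _ = Real.sqrt t * |y| := hxξ
              _ < min ρ r := hsy
              _ ≤ ρ := min_le_left _ _
          have := hρb hcρ
          rwa [Real.dist_eq] at this
        have hval : (S (Real.sqrt t * y + ξ) - S ξ) / t = deriv (deriv S) c * y ^ 2 / 2 := by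
          rw [heq, show Real.sqrt t * y + ξ - ξ = Real.sqrt t * y by ring, mul_pow,
            Real.sq_sqrt ht.le]
          field_simp
        rw [Real.dist_eq, hval]
        have habs : |deriv (deriv S) c * y ^ 2 / 2 - A / 2 * y ^ 2| =
            |deriv (deriv S) c - A| * (y ^ 2 / 2) := by
          rw [show deriv (deriv S) c * y ^ 2 / 2 - A / 2 * y ^ 2 =
            (deriv (deriv S) c - A) * (y ^ 2 / 2) by ring, abs_mul,
            abs_of_nonneg (by positivity : (0:ℝ) ≤ y ^ 2 / 2)]
        rw [habs]
        calc |deriv (deriv S) c - A| * (y ^ 2 / 2)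
            ≤ ε / (y ^ 2 / 2 + 1) * (y ^ 2 / 2) :=
              mul_le_mul_of_nonneg_right hSc.le (by positivity)
          _ < ε / (y ^ 2 / 2 + 1) * (y ^ 2 / 2 + 1) := by nlinarith
          _ = ε := div_mul_cancel₀ _ (by positivity)
      have hexp : Tendsto (fun t : ℝ => Real.exp (-(S (Real.sqrt t * y + ξ) - S ξ) / t))
          (nhdsWithin 0 (Set.Ioi 0)) (nhds (Real.exp (-(A / 2) * y ^ 2))) := by
        have h2 := (Real.continuous_exp.tendsto (-(A / 2 * y ^ 2))).comp hratio.neg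
        rw [show -(A / 2) * y ^ 2 = -(A / 2 * y ^ 2) by ring]
        refine h2.congr fun u => ?_
        simp only [Function.comp_def]
        ring_nf
      exact hφt.mul hexp
  -- value of the Gaussian integral
  have hgauss : (∫ y : ℝ, φ ξ * Real.exp (-(A / 2) * y ^ 2)) =
      φ ξ * Real.sqrt (2 * Real.pi / A) := by
    rw [MeasureTheory.integral_const_mul, integral_gaussian]
    congr 2
    field_simp
  -- change of variables
  have hCOV : ∀ t : ℝ, 0 < t →
      (∫ x in a..b, φ x * Real.exp (-(S x - S ξ) / t)) / Real.sqrt t = ∫ y : ℝ, G t y := by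
    intro t ht
    have hs : 0 < Real.sqrt t := Real.sqrt_pos.mpr ht
    have hle : (a - ξ) / Real.sqrt t ≤ (b - ξ) / Real.sqrt t := by
      gcongr

    have hcov := intervalIntegral.integral_comp_mul_add
      (a := (a - ξ) / Real.sqrt t) (b := (b - ξ) / Real.sqrt t)
      (f := fun x => φ x * Real.exp (-(S x - S ξ) / t)) (c := Real.sqrt t) hs.ne' ξ
    have ha' : Real.sqrt t * ((a - ξ) / Real.sqrt t) + ξ = a := by field_simp; ring
    have hb' : Real.sqrt t * ((b - ξ) / Real.sqrt t) + ξ = b := by field_simp; ring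
    rw [ha', hb'] at hcov
    calc (∫ x in a..b, φ x * Real.exp (-(S x - S ξ) / t)) / Real.sqrt t
        = (Real.sqrt t)⁻¹ • ∫ x in a..b, φ x * Real.exp (-(S x - S ξ) / t) := by
          rw [smul_eq_mul, ← div_eq_inv_mul]
      _ = ∫ y in (a - ξ) / Real.sqrt t..(b - ξ) / Real.sqrt t, g t y := hcov.symm
      _ = ∫ y in Ioc ((a - ξ) / Real.sqrt t) ((b - ξ) / Real.sqrt t), g t y :=
          intervalIntegral.integral_of_le hle
      _ = ∫ y : ℝ, G t y := (MeasureTheory.integral_indicator measurableSet_Ioc).symm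
  -- main limit
  have main : Tendsto (fun t => (∫ x in a..b, φ x * Real.exp (-(S x - S ξ) / t)) / Real.sqrt t)
      (nhdsWithin 0 (Set.Ioi 0)) (nhds (φ ξ * Real.sqrt (2 * Real.pi / A))) := by
    rw [← hgauss]
    refine Tendsto.congr' ?_ hDCT
    filter_upwards [eventually_mem_nhdsWithin] with t ht
    exact (hCOV t ht).symm
  -- final algebra
  have hfinal := main.sub_const (φ ξ * Real.sqrt (2 * Real.pi / A))
  rw [sub_self] at hfinal
  refine Tendsto.congr' ?_ hfinal
  filter_upwards [eventually_mem_nhdsWithin] with t ht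
  have ht : (0:ℝ) < t := ht
  have hE : Real.exp (-S ξ / t) ≠ 0 := (Real.exp_pos _).ne'
  have hst : Real.sqrt t ≠ 0 := (Real.sqrt_pos.mpr ht).ne'
  have e2 : (∫ x in a..b, φ x * Real.exp (-S x / t)) =
      Real.exp (-S ξ / t) * ∫ x in a..b, φ x * Real.exp (-(S x - S ξ) / t) := by
    rw [← intervalIntegral.integral_const_mul]
    apply intervalIntegral.integral_congr
    intro x _
    show φ x * Real.exp (-S x / t) =
      Real.exp (-S ξ / t) * (φ x * Real.exp (-(S x - S ξ) / t))
    have hx : -S x / t = -S ξ / t + -(S x - S ξ) / t := by ring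
    rw [hx, Real.exp_add]
    ring
  have e3 : Real.sqrt (2 * Real.pi * t / A) = Real.sqrt t * Real.sqrt (2 * Real.pi / A) := by
    rw [show 2 * Real.pi * t / A = t * (2 * Real.pi / A) by ring, Real.sqrt_mul ht.le]
  rw [e2, e3]
  field_simp
end

section
/- For every m ≥ 1, the sum over all graphs Γ in 𝔊(n) of the weights c(Γ) = (n! / (|n|-1)!!) · (∏_{i<j} γ_{ij}! · ∏_i γ_{ii}!!)^{-1} equals 1, where 𝔊(n) is the set of symmetric k×k matrices with nonnegative integer entries, even diagonal entries, and row sums n₁,…,n_k with |n| = n₁+⋯+n_k = 2N even. -/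
open Finset Nat

private def Gset (k b : ℕ) (n : Fin k → ℕ) : Finset (Fin k → Fin k → Fin (b+1)) :=
  Finset.univ.filter fun Γ => (∀ i j, Γ i j = Γ j i) ∧ (∀ i, Even (Γ i i : ℕ)) ∧
    (∀ i, ∑ j, (Γ i j : ℕ) = n i)

private def wt (k b N : ℕ) (n : Fin k → ℕ) (Γ : Fin k → Fin k → Fin (b+1)) : ℚ :=
  ((∏ i, (n i).factorial : ℕ) : ℚ) /
    (((2 * N - 1)‼ *
      (∏ p ∈ Finset.univ.filter (fun p : Fin k × Fin k => p.1 < p.2),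
        ((Γ p.1 p.2 : ℕ)).factorial) *
      ∏ i, ((Γ i i : ℕ))‼ : ℕ) : ℚ)


private def dd (k : ℕ) (i0 j : Fin k) (a c : Fin k) : ℕ :=
  (if a = i0 ∧ c = j then 1 else 0) + (if a = j ∧ c = i0 then 1 else 0)

private lemma dd_symm (k : ℕ) (i0 j a c : Fin k) : dd k i0 j a c = dd k i0 j c a := by
  unfold dd
  by_cases h1 : a = i0 <;> by_cases h2 : a = j <;> by_cases h3 : c = i0 <;>
    by_cases h4 : c = j <;> simp [h1, h2, h3, h4, and_comm] <;> omega

private lemma dd_le_two (k : ℕ) (i0 j a c : Fin k) : dd k i0 j a c ≤ 2 := by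
  unfold dd; split_ifs <;> omega

private lemma dd_diag (k : ℕ) (i0 j a : Fin k) :
    dd k i0 j a a = if a = i0 ∧ j = i0 then 2 else 0 := by
  unfold dd
  by_cases h1 : a = i0 <;> by_cases h2 : a = j <;>
    simp_all [eq_comm] <;> try omega

private lemma dd_i0j (k : ℕ) (i0 j : Fin k) :
    dd k i0 j i0 j = if j = i0 then 2 else 1 := by
  unfold dd
  by_cases h : j = i0 <;> simp [h, eq_comm]

private lemma dd_off (k : ℕ) (i0 j a c : Fin k) (h1 : ¬(a = i0 ∧ c = j))
    (h2 : ¬(a = j ∧ c = i0)) : dd k i0 j a c = 0 := by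
  unfold dd; rw [if_neg h1, if_neg h2]

private lemma dd_row (k : ℕ) (i0 j a : Fin k) :
    ∑ c, dd k i0 j a c = (if a = i0 then 1 else 0) + (if a = j then 1 else 0) := by
  unfold dd
  rw [Finset.sum_add_distrib]
  congr 1
  · by_cases h : a = i0
    · simp only [h, true_and]
      simpa using Finset.sum_ite_eq' Finset.univ j (fun _ => 1)
    · simp [h]
  · by_cases h : a = j
    · simp only [h, true_and]
      simpa using Finset.sum_ite_eq' Finset.univ i0 (fun _ => 1)
    · simp [h]

private lemma even_tsub {x y : ℕ} (hx : Even x) (hy : Even y) : Even (x - y) := by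
  obtain ⟨u, hu⟩ := hx; obtain ⟨v, hv⟩ := hy
  exact ⟨u - v, by omega⟩

private def Fm (k b : ℕ) (i0 j : Fin k) (Γ : Fin k → Fin k → Fin (b+1)) :
    Fin k → Fin k → Fin (b+1) :=
  fun a c => ⟨(Γ a c : ℕ) - dd k i0 j a c,
    lt_of_le_of_lt (Nat.sub_le _ _) (Γ a c).isLt⟩

private def Gm (k b : ℕ) (i0 j : Fin k) (Γ : Fin k → Fin k → Fin (b+1)) :
    Fin k → Fin k → Fin (b+1) :=
  fun a c => ⟨min ((Γ a c : ℕ) + dd k i0 j a c) b,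
    Nat.lt_succ_of_le (min_le_right _ _)⟩

private lemma Fm_val (k b : ℕ) (i0 j : Fin k) (Γ : Fin k → Fin k → Fin (b+1)) (a c : Fin k) :
    ((Fm k b i0 j Γ) a c : ℕ) = (Γ a c : ℕ) - dd k i0 j a c := rfl

private lemma Gm_val (k b : ℕ) (i0 j : Fin k) (Γ : Fin k → Fin k → Fin (b+1)) (a c : Fin k) :
    ((Gm k b i0 j Γ) a c : ℕ) = min ((Γ a c : ℕ) + dd k i0 j a c) b := rfl

private lemma df_step (N : ℕ) : (2*(N+1) - 1)‼ = (2*N+1) * (2*N-1)‼ := by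
  cases N with
  | zero => simp [Nat.doubleFactorial]
  | succ m =>
    have h1 : 2*(m+1+1) - 1 = (2*m+1)+2 := by omega
    have h2 : 2*(m+1) - 1 = 2*m+1 := by omega
    rw [h1, h2, Nat.doubleFactorial_add_two]
    have h3 : 2*(m+1)+1 = 2*m+1+2 := by ring
    rw [h3]

private lemma aux (k b N : ℕ) : ∀ n : Fin k → ℕ, 2*N ≤ b → (∑ i, n i = 2*N) →
    ∑ Γ ∈ Gset k b n, wt k b N n Γ = 1 := by
  induction N with
  | zero =>
    intro n _ hn
    have hn0 : ∀ i, n i = 0 := by simpa using hn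
    have hset : Gset k b n = {fun _ _ => (0 : Fin (b+1))} := by
      ext Γ
      simp only [Gset, Finset.mem_filter, Finset.mem_univ, true_and, Finset.mem_singleton]
      constructor
      · rintro ⟨hs, he, hr⟩
        funext i j
        have h0 : ∑ c, (Γ i c : ℕ) = 0 := by rw [hr i, hn0 i]
        have h1 : (Γ i j : ℕ) = 0 :=
          Finset.sum_eq_zero_iff.mp h0 j (Finset.mem_univ j)
        exact Fin.ext h1
      · rintro rfl
        exact ⟨fun _ _ => rfl, fun i => by simp, fun i => by simp [hn0 i]⟩
    rw [hset, Finset.sum_singleton]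
    simp [wt, hn0, Nat.doubleFactorial]
  | succ N ih =>
    intro n hb hn
    have hex : ∃ i0, n i0 ≠ 0 := by
      by_contra h
      push_neg at h
      have h0 : ∑ i, n i = 0 := Finset.sum_eq_zero fun i _ => h i
      omega
    obtain ⟨i0, hi0⟩ := hex
    have hQi0 : ((n i0 : ℚ)) ≠ 0 := by exact_mod_cast hi0
    have key : ∀ j : Fin k,
        ∑ Γ ∈ Gset k b n, ((Γ i0 j : ℕ) : ℚ) * wt k b (N+1) n Γ
          = (n i0 : ℚ) * ((n j : ℚ) - if j = i0 then 1 else 0) / (2*(N:ℚ)+1) := by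
      intro j
      by_cases hd : (if j = i0 then 2 else 1) ≤ n j
      · -- main case
        have hdj : 1 ≤ n j := by
          by_cases h : j = i0
          · rw [if_pos h] at hd; omega
          · rw [if_neg h] at hd; omega
        have hdii : j = i0 → 2 ≤ n i0 := by
          intro h; rw [h] at hd; simpa using hd
        set n' : Fin k → ℕ :=
          fun a => n a - (if a = i0 then 1 else 0) - (if a = j then 1 else 0) with hn'def
        have hrecn : ∀ a, n a = n' a + ((if a = i0 then 1 else 0) + (if a = j then 1 else 0)) := by
          intro a
          simp only [hn'def]
          by_cases h1 : a = i0 <;> by_cases h2 : a = j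
          · have h3 := hdii (h2.symm.trans h1)
            have hna : n a = n i0 := congrArg n h1
            rw [if_pos h1, if_pos h2]
            omega
          · have hna : n a = n i0 := congrArg n h1
            rw [if_pos h1, if_neg h2]
            omega
          · have hna : n a = n j := congrArg n h2
            rw [if_neg h1, if_pos h2]
            omega
          · rw [if_neg h1, if_neg h2]
            omega
        have hsumn' : ∑ a, n' a = 2*N := by
          have hc : ∑ a, n a
              = ∑ a, (n' a + ((if a = i0 then 1 else 0) + (if a = j then 1 else 0))) :=
            Finset.sum_congr rfl fun a _ => hrecn a
          rw [Finset.sum_add_distrib, Finset.sum_add_distrib] at hc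
          have e1 : ∑ a : Fin k, (if a = i0 then 1 else 0) = 1 := by
            simpa using Finset.sum_ite_eq' Finset.univ i0 (fun _ => (1:ℕ))
          have e2 : ∑ a : Fin k, (if a = j then 1 else 0) = 1 := by
            simpa using Finset.sum_ite_eq' Finset.univ j (fun _ => (1:ℕ))
          rw [e1, e2] at hc
          omega
        have hih := ih n' (by omega) hsumn'
        set T : Finset (Fin k → Fin k → Fin (b+1)) :=
          (Gset k b n).filter (fun Γ => (Γ i0 j : ℕ) ≠ 0) with hTdef
        have hTle : ∀ Γ ∈ T, ∀ a c : Fin k, dd k i0 j a c ≤ (Γ a c : ℕ) := by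
          intro Γ hT a c
          obtain ⟨hmem, hx⟩ := Finset.mem_filter.mp hT
          obtain ⟨-, hs, he, hr⟩ := Finset.mem_filter.mp hmem
          have hxx : 1 ≤ (Γ i0 j : ℕ) := Nat.one_le_iff_ne_zero.mpr hx
          have hsym : (Γ j i0 : ℕ) = (Γ i0 j : ℕ) := congrArg Fin.val (hs j i0)
          by_cases h1 : a = i0 ∧ c = j
          · by_cases h2 : a = j ∧ c = i0
            · have hji : j = i0 := h2.1.symm.trans h1.1
              have hdd := dd_le_two k i0 j a c
              have hval : (Γ a c : ℕ) = (Γ i0 i0 : ℕ) := by rw [h1.1, h1.2, hji]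
              have hv2 : (Γ i0 j : ℕ) = (Γ i0 i0 : ℕ) := by rw [hji]
              obtain ⟨u, hu⟩ := he i0
              omega
            · have hval : (Γ a c : ℕ) = (Γ i0 j : ℕ) := by rw [h1.1, h1.2]
              unfold dd
              rw [if_pos h1, if_neg h2]
              omega
          · by_cases h2 : a = j ∧ c = i0
            · have hval : (Γ a c : ℕ) = (Γ j i0 : ℕ) := by rw [h2.1, h2.2]
              unfold dd
              rw [if_neg h1, if_pos h2]
              omega
            · rw [dd_off k i0 j a c h1 h2]
              omega
        have hGb : ∀ Γ' ∈ Gset k b n', ∀ a c : Fin k, (Γ' a c : ℕ) + dd k i0 j a c ≤ b := by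
          intro Γ' hΓ' a c
          obtain ⟨-, hs, he, hr⟩ := Finset.mem_filter.mp hΓ'
          have h1 : (Γ' a c : ℕ) ≤ n' a := by
            rw [← hr a]
            exact Finset.single_le_sum (f := fun c => (Γ' a c : ℕ))
              (fun _ _ => Nat.zero_le _) (Finset.mem_univ c)
          have h2 : n' a ≤ 2*N := by
            rw [← hsumn']
            exact Finset.single_le_sum (f := fun a => n' a)
              (fun _ _ => Nat.zero_le _) (Finset.mem_univ a)
          have h3 := dd_le_two k i0 j a c
          omega
        have hFmem : ∀ Γ ∈ T, Fm k b i0 j Γ ∈ Gset k b n' := by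
          intro Γ hT
          have hle := hTle Γ hT
          obtain ⟨hmem, hx⟩ := Finset.mem_filter.mp hT
          obtain ⟨-, hs, he, hr⟩ := Finset.mem_filter.mp hmem
          simp only [Gset, Finset.mem_filter, Finset.mem_univ, true_and]
          refine ⟨fun a c => ?_, fun a => ?_, fun a => ?_⟩
          · apply Fin.ext
            rw [Fm_val, Fm_val, dd_symm k i0 j a c, congrArg Fin.val (hs a c)]
          · rw [Fm_val, dd_diag]
            obtain ⟨u, hu⟩ := he a
            by_cases h : a = i0 ∧ j = i0
            · rw [if_pos h]; exact ⟨u - 1, by omega⟩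
            · rw [if_neg h]; exact ⟨u, by omega⟩
          · have hee : ∑ c, ((Fm k b i0 j Γ) a c : ℕ) = ∑ c, ((Γ a c : ℕ) - dd k i0 j a c) :=
              Finset.sum_congr rfl fun c _ => Fm_val k b i0 j Γ a c
            rw [hee, Finset.sum_tsub_distrib _ (fun c _ => hle a c), hr a, dd_row]
            have hra := hrecn a
            omega
        have hGv : ∀ Γ' ∈ Gset k b n', ∀ a c : Fin k,
            ((Gm k b i0 j Γ') a c : ℕ) = (Γ' a c : ℕ) + dd k i0 j a c := by
          intro Γ' hΓ' a c
          rw [Gm_val]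
          exact Nat.min_eq_left (hGb Γ' hΓ' a c)
        have hGmem : ∀ Γ' ∈ Gset k b n', Gm k b i0 j Γ' ∈ T := by
          intro Γ' hΓ'
          have hv := hGv Γ' hΓ'
          obtain ⟨-, hs, he, hr⟩ := Finset.mem_filter.mp hΓ'
          rw [hTdef, Finset.mem_filter]
          constructor
          · simp only [Gset, Finset.mem_filter, Finset.mem_univ, true_and]
            refine ⟨fun a c => ?_, fun a => ?_, fun a => ?_⟩
            · apply Fin.ext
              rw [hv a c, hv c a, dd_symm k i0 j a c, congrArg Fin.val (hs a c)]
            · rw [hv a a, dd_diag]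
              obtain ⟨u, hu⟩ := he a
              by_cases h : a = i0 ∧ j = i0
              · rw [if_pos h]; exact ⟨u + 1, by omega⟩
              · rw [if_neg h]; exact ⟨u, by omega⟩
            · rw [Finset.sum_congr rfl (fun c _ => hv a c), Finset.sum_add_distrib, hr a, dd_row]
              exact (hrecn a).symm
          · rw [hv i0 j, dd_i0j]
            by_cases h : j = i0
            · rw [if_pos h]; omega
            · rw [if_neg h]; omega
        have hFG : ∀ Γ ∈ T, Gm k b i0 j (Fm k b i0 j Γ) = Γ := by
          intro Γ hT
          funext a c
          apply Fin.ext
          rw [Gm_val, Fm_val]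
          have h1 := hTle Γ hT a c
          have h2 := (Γ a c).isLt
          omega
        have hGF : ∀ Γ' ∈ Gset k b n', Fm k b i0 j (Gm k b i0 j Γ') = Γ' := by
          intro Γ' hΓ'
          funext a c
          apply Fin.ext
          rw [Fm_val, hGv Γ' hΓ' a c]
          omega
        have hterm : ∀ Γ ∈ T,
            ((Γ i0 j : ℕ) : ℚ) * wt k b (N+1) n Γ
              = (n i0 : ℚ) * ((n j : ℚ) - if j = i0 then 1 else 0) / (2*(N:ℚ)+1)
                * wt k b N n' (Fm k b i0 j Γ) := by
          intro Γ hT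
          obtain ⟨hmem, hx⟩ := Finset.mem_filter.mp hT
          obtain ⟨-, hs, he, hr⟩ := Finset.mem_filter.mp hmem
          have hxx : 1 ≤ (Γ i0 j : ℕ) := Nat.one_le_iff_ne_zero.mpr hx
          have hx2 : j = i0 → 2 ≤ (Γ i0 j : ℕ) := by
            intro h
            obtain ⟨u, hu⟩ := he i0
            have hv : (Γ i0 j : ℕ) = (Γ i0 i0 : ℕ) := by rw [h]
            omega
          -- (1) numerator decomposition
          have hpt : ∀ i : Fin k, (n i).factorial
              = (n' i).factorial * ((if i = i0 then n i0 else 1)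
                * (if i = j then n j - (if j = i0 then 1 else 0) else 1)) := by
            intro i
            by_cases h1 : i = i0 <;> by_cases h2 : i = j
            · have hji : j = i0 := h2.symm.trans h1
              have h3 := hdii hji
              have hni : n i = n i0 := congrArg n h1
              have hnj : n j = n i0 := congrArg n hji
              have hn'i : n' i = n i0 - 1 - 1 := by
                simp only [hn'def]
                rw [if_pos h1, if_pos h2, hni]
              rw [if_pos h1, if_pos h2, if_pos hji, hni, hnj, hn'i]
              obtain ⟨m, hm⟩ : ∃ m, n i0 = m + 2 := ⟨n i0 - 2, by omega⟩
              rw [hm]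
              have e1 : m + 2 - 1 - 1 = m := by omega
              have e2 : m + 2 - 1 = m + 1 := by omega
              rw [e1, e2]
              simp [Nat.factorial_succ]
              ring
            · have hni : n i = n i0 := congrArg n h1
              have hn'i : n' i = n i0 - 1 := by
                simp only [hn'def]
                rw [if_pos h1, if_neg h2, hni]
                omega
              rw [if_pos h1, if_neg h2, hni, hn'i, mul_one]
              obtain ⟨m, hm⟩ : ∃ m, n i0 = m + 1 := ⟨n i0 - 1, by omega⟩
              rw [hm]
              have e1 : m + 1 - 1 = m := by omega
              rw [e1]
              simp [Nat.factorial_succ]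
              ring
            · have hnj : n i = n j := congrArg n h2
              have hji : ¬ j = i0 := fun h => h1 (h2.trans h)
              have hn'i : n' i = n j - 1 := by
                simp only [hn'def]
                rw [if_neg h1, if_pos h2, hnj]
                omega
              rw [if_neg h1, if_pos h2, if_neg hji, hnj, hn'i, one_mul]
              obtain ⟨m, hm⟩ : ∃ m, n j = m + 1 := ⟨n j - 1, by omega⟩
              rw [hm]
              have e1 : m + 1 - 1 = m := by omega
              have e2 : m + 1 - 0 = m + 1 := by omega
              rw [e1, e2]
              simp [Nat.factorial_succ]
              ring
            · have hn'i : n' i = n i := by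
                simp only [hn'def]
                rw [if_neg h1, if_neg h2]
                omega
              rw [if_neg h1, if_neg h2, hn'i]
              simp
          have hprodn : (∏ i, (n i).factorial)
              = (n i0 * (n j - if j = i0 then 1 else 0)) * ∏ i, (n' i).factorial := by
            calc ∏ i, (n i).factorial
                = ∏ i, ((n' i).factorial * ((if i = i0 then n i0 else 1)
                    * (if i = j then n j - (if j = i0 then 1 else 0) else 1))) :=
                  Finset.prod_congr rfl fun i _ => hpt i
              _ = (∏ i, (n' i).factorial) * ((∏ i, (if i = i0 then n i0 else 1))
                    * (∏ i, (if i = j then n j - (if j = i0 then 1 else 0) else 1))) := by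
                  rw [Finset.prod_mul_distrib, Finset.prod_mul_distrib]
              _ = (n i0 * (n j - if j = i0 then 1 else 0)) * ∏ i, (n' i).factorial := by
                  rw [Finset.prod_ite_eq' Finset.univ i0 (fun _ => n i0),
                    Finset.prod_ite_eq' Finset.univ j
                      (fun _ => n j - if j = i0 then 1 else 0)]
                  simp [mul_comm]
          -- (2) off-diagonal decomposition
          have hoffpt : ∀ p ∈ Finset.univ.filter (fun p : Fin k × Fin k => p.1 < p.2),
              ((Γ p.1 p.2 : ℕ)).factorial
                = (((Fm k b i0 j Γ) p.1 p.2 : ℕ)).factorial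
                  * (if p = (i0, j) ∨ p = (j, i0) then (Γ i0 j : ℕ) else 1) := by
            intro p hp
            have hplt : p.1 < p.2 := (Finset.mem_filter.mp hp).2
            rw [Fm_val]
            by_cases hc : p = (i0, j) ∨ p = (j, i0)
            · rw [if_pos hc]
              have hkey : (Γ p.1 p.2 : ℕ) = (Γ i0 j : ℕ) ∧ dd k i0 j p.1 p.2 = 1 := by
                rcases hc with hc | hc
                · have h1 : p.1 = i0 := congrArg Prod.fst hc
                  have h2 : p.2 = j := congrArg Prod.snd hc
                  have hne : ¬ (p.1 = j ∧ p.2 = i0) := by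
                    rintro ⟨ha, hb⟩
                    rw [h1, h2] at hplt
                    have hji : j = i0 := ha.symm.trans h1
                    rw [hji] at hplt
                    exact lt_irrefl _ hplt
                  constructor
                  · rw [h1, h2]
                  · unfold dd
                    rw [if_pos ⟨h1, h2⟩, if_neg hne]
                · have h1 : p.1 = j := congrArg Prod.fst hc
                  have h2 : p.2 = i0 := congrArg Prod.snd hc
                  have hne : ¬ (p.1 = i0 ∧ p.2 = j) := by
                    rintro ⟨ha, hb⟩
                    rw [h1, h2] at hplt
                    have hji : i0 = j := ha.symm.trans h1
                    rw [hji] at hplt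
                    exact lt_irrefl _ hplt
                  constructor
                  · rw [h1, h2, congrArg Fin.val (hs j i0)]
                  · unfold dd
                    rw [if_neg hne, if_pos ⟨h1, h2⟩]
              rw [hkey.1, hkey.2]
              obtain ⟨m, hm⟩ : ∃ m, (Γ i0 j : ℕ) = m + 1 := ⟨(Γ i0 j : ℕ) - 1, by omega⟩
              rw [hm]
              have e1 : m + 1 - 1 = m := by omega
              rw [e1]
              simp [Nat.factorial_succ]
              ring
            · rw [if_neg hc, dd_off k i0 j p.1 p.2]
              · simp
              · rintro ⟨ha, hb⟩
                exact hc (Or.inl (Prod.ext_iff.mpr ⟨ha, hb⟩))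
              · rintro ⟨ha, hb⟩
                exact hc (Or.inr (Prod.ext_iff.mpr ⟨ha, hb⟩))
          have hofffac : (∏ p ∈ Finset.univ.filter (fun p : Fin k × Fin k => p.1 < p.2),
              (if p = (i0, j) ∨ p = (j, i0) then (Γ i0 j : ℕ) else 1))
              = (if j = i0 then 1 else (Γ i0 j : ℕ)) := by
            by_cases hji : j = i0
            · rw [if_pos hji]
              apply Finset.prod_eq_one
              intro p hp
              have hplt : p.1 < p.2 := (Finset.mem_filter.mp hp).2
              rw [if_neg]
              rintro (hc | hc) <;> rw [hc, hji] at hplt <;> exact lt_irrefl _ hplt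
            · rw [if_neg hji]
              rcases Ne.lt_or_gt (fun h : i0 = j => hji h.symm) with hlt | hlt
              · rw [Finset.prod_eq_single ((i0, j) : Fin k × Fin k)]
                · rw [if_pos (Or.inl rfl)]
                · intro q hq hne
                  have hqlt : q.1 < q.2 := (Finset.mem_filter.mp hq).2
                  rw [if_neg]
                  rintro (hc | hc)
                  · exact hne hc
                  · rw [hc] at hqlt
                    simp only at hqlt
                    omega
                · intro habs
                  exact absurd (Finset.mem_filter.mpr
                    ⟨Finset.mem_univ ((i0, j) : Fin k × Fin k), hlt⟩) habs
              · rw [Finset.prod_eq_single ((j, i0) : Fin k × Fin k)]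
                · rw [if_pos (Or.inr rfl)]
                · intro q hq hne
                  have hqlt : q.1 < q.2 := (Finset.mem_filter.mp hq).2
                  rw [if_neg]
                  rintro (hc | hc)
                  · rw [hc] at hqlt
                    simp only at hqlt
                    omega
                  · exact hne hc
                · intro habs
                  exact absurd (Finset.mem_filter.mpr
                    ⟨Finset.mem_univ ((j, i0) : Fin k × Fin k), hlt⟩) habs
          have hoff : (∏ p ∈ Finset.univ.filter (fun p : Fin k × Fin k => p.1 < p.2),
              ((Γ p.1 p.2 : ℕ)).factorial)
              = (∏ p ∈ Finset.univ.filter (fun p : Fin k × Fin k => p.1 < p.2),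
                  (((Fm k b i0 j Γ) p.1 p.2 : ℕ)).factorial)
                * (if j = i0 then 1 else (Γ i0 j : ℕ)) := by
            rw [Finset.prod_congr rfl hoffpt, Finset.prod_mul_distrib, hofffac]
          -- (3) diagonal decomposition
          have hdiagpt : ∀ a : Fin k, ((Γ a a : ℕ))‼
              = (((Fm k b i0 j Γ) a a : ℕ))‼ * (if a = i0 ∧ j = i0 then (Γ i0 j : ℕ) else 1) := by
            intro a
            rw [Fm_val, dd_diag]
            by_cases h : a = i0 ∧ j = i0
            · rw [if_pos h, if_pos h]
              have hval : (Γ a a : ℕ) = (Γ i0 j : ℕ) := by rw [h.1, h.2]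
              have h2 := hx2 h.2
              obtain ⟨m, hm⟩ : ∃ m, (Γ i0 j : ℕ) = m + 2 := ⟨(Γ i0 j : ℕ) - 2, by omega⟩
              rw [hval, hm]
              have e1 : m + 2 - 2 = m := by omega
              rw [e1, Nat.doubleFactorial_add_two]
              ring
            · rw [if_neg h, if_neg h]
              simp
          have hdiag : (∏ i, ((Γ i i : ℕ))‼)
              = (∏ i, (((Fm k b i0 j Γ) i i : ℕ))‼) * (if j = i0 then (Γ i0 j : ℕ) else 1) := by
            rw [Finset.prod_congr rfl (fun a _ => hdiagpt a), Finset.prod_mul_distrib]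
            congr 1
            by_cases hji : j = i0
            · rw [if_pos hji]
              calc ∏ a : Fin k, (if a = i0 ∧ j = i0 then (Γ i0 j : ℕ) else 1)
                  = ∏ a : Fin k, (if a = i0 then (Γ i0 j : ℕ) else 1) :=
                    Finset.prod_congr rfl (fun a _ => by simp [hji])
                _ = (Γ i0 j : ℕ) := by
                    rw [Finset.prod_ite_eq' Finset.univ i0 (fun _ => (Γ i0 j : ℕ))]
                    simp
            · rw [if_neg hji]
              apply Finset.prod_eq_one
              intro a _
              rw [if_neg (fun hh => hji hh.2)]
          -- (4) put it together
          have hDF : (((2*N-1)‼ : ℕ) : ℚ) ≠ 0 := by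
            exact_mod_cast (Nat.doubleFactorial_pos _).ne'
          have hD2 : ((∏ p ∈ Finset.univ.filter (fun p : Fin k × Fin k => p.1 < p.2),
              (((Fm k b i0 j Γ) p.1 p.2 : ℕ)).factorial : ℕ) : ℚ) ≠ 0 := by
            exact_mod_cast (Finset.prod_pos (fun p _ => Nat.factorial_pos _)).ne'
          have hD3 : ((∏ i, (((Fm k b i0 j Γ) i i : ℕ))‼ : ℕ) : ℚ) ≠ 0 := by
            exact_mod_cast (Finset.prod_pos (fun p _ => Nat.doubleFactorial_pos _)).ne'
          have hxQ : ((Γ i0 j : ℕ) : ℚ) ≠ 0 := by exact_mod_cast hx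
          have h2NQ : (2*(N:ℚ)+1) ≠ 0 := by positivity
          simp only [wt]
          rw [df_step, hprodn, hoff, hdiag]
          by_cases hji : j = i0
          · rw [if_pos hji, if_pos hji, if_pos hji, if_pos hji]
            have hc1 : ((n j - 1 : ℕ) : ℚ) = (n j : ℚ) - 1 := by
              have := hdj
              push_cast [Nat.cast_sub this]
              ring
            push_cast [hc1]
            field_simp
          · rw [if_neg hji, if_neg hji, if_neg hji, if_neg hji]
            rw [Nat.sub_zero]
            push_cast
            field_simp
            ring
        calc ∑ Γ ∈ Gset k b n, ((Γ i0 j : ℕ) : ℚ) * wt k b (N+1) n Γ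
            = ∑ Γ ∈ T, ((Γ i0 j : ℕ) : ℚ) * wt k b (N+1) n Γ := by
              rw [hTdef]
              refine (Finset.sum_filter_of_ne ?_).symm
              intro Γ hΓ hne h0
              exact hne (by rw [h0]; simp)
          _ = ∑ Γ' ∈ Gset k b n', (n i0 : ℚ) * ((n j : ℚ) - if j = i0 then 1 else 0) / (2*(N:ℚ)+1)
                * wt k b N n' Γ' :=
              Finset.sum_nbij' (Fm k b i0 j) (Gm k b i0 j) hFmem hGmem hFG hGF hterm
          _ = (n i0 : ℚ) * ((n j : ℚ) - if j = i0 then 1 else 0) / (2*(N:ℚ)+1) := by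
              rw [← Finset.mul_sum, hih, mul_one]
      · -- degenerate case: every admissible Γ has Γ i0 j = 0
        have hzero : ∀ Γ ∈ Gset k b n, (Γ i0 j : ℕ) = 0 := by
          intro Γ hΓ
          obtain ⟨-, hs, he, hr⟩ := Finset.mem_filter.mp hΓ
          have hle : (Γ j i0 : ℕ) ≤ n j := by
            rw [← hr j]
            exact Finset.single_le_sum (f := fun c => (Γ j c : ℕ))
              (fun c _ => Nat.zero_le _) (Finset.mem_univ i0)
          have hval : (Γ i0 j : ℕ) = (Γ j i0 : ℕ) := congrArg Fin.val (hs i0 j)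
          by_cases hji : j = i0
          · rw [hji] at hval hle ⊢
            obtain ⟨c, hc⟩ := he i0
            rw [if_pos hji] at hd
            rw [hji] at hd
            omega
          · rw [if_neg hji] at hd
            omega
        rw [Finset.sum_eq_zero (fun Γ hΓ => by rw [hzero Γ hΓ]; simp)]
        by_cases hji : j = i0
        · have hnj : n j = 1 := by
            rw [if_pos hji] at hd
            have : n j = n i0 := congrArg n hji
            omega
          rw [if_pos hji, hnj]
          norm_num
        · have hnj : n j = 0 := by
            rw [if_neg hji] at hd
            omega
          rw [if_neg hji, hnj]
          norm_num
    have expand : ∀ Γ ∈ Gset k b n,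
        wt k b (N+1) n Γ = (∑ j, ((Γ i0 j : ℕ) : ℚ) * wt k b (N+1) n Γ) / (n i0) := by
      intro Γ hΓ
      obtain ⟨-, hs, he, hr⟩ := Finset.mem_filter.mp hΓ
      have hsum : ∑ j, ((Γ i0 j : ℕ) : ℚ) = (n i0 : ℚ) := by
        rw [← Nat.cast_sum, hr i0]
      rw [← Finset.sum_mul, hsum]
      field_simp
    have hsj : ∑ j : Fin k, ((n j : ℚ) - if j = i0 then 1 else 0) = 2*(N:ℚ)+1 := by
      rw [Finset.sum_sub_distrib]
      have h1 : ∑ j : Fin k, ((n j : ℕ) : ℚ) = 2*(N:ℚ)+2 := by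
        rw [← Nat.cast_sum, hn]; push_cast; ring
      have h2 : ∑ j : Fin k, (if j = i0 then (1:ℚ) else 0) = 1 := by
        simp [Finset.sum_ite_eq']
      rw [h1, h2]; ring
    have h2N : (2*(N:ℚ)+1) ≠ 0 := by positivity
    calc ∑ Γ ∈ Gset k b n, wt k b (N+1) n Γ
        = ∑ Γ ∈ Gset k b n, (∑ j, ((Γ i0 j : ℕ) : ℚ) * wt k b (N+1) n Γ) / (n i0) :=
          Finset.sum_congr rfl expand
      _ = (∑ j : Fin k, ∑ Γ ∈ Gset k b n, ((Γ i0 j : ℕ) : ℚ) * wt k b (N+1) n Γ) / (n i0) := by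
          rw [← Finset.sum_div, Finset.sum_comm]
      _ = (∑ j : Fin k, (n i0 : ℚ) * ((n j : ℚ) - if j = i0 then 1 else 0) / (2*(N:ℚ)+1)) / (n i0) := by
          rw [Finset.sum_congr rfl fun j _ => key j]
      _ = ((n i0 : ℚ) * (2*(N:ℚ)+1) / (2*(N:ℚ)+1)) / (n i0) := by
          rw [← Finset.sum_div, ← Finset.mul_sum, hsj]
      _ = 1 := by field_simp

theorem graph_weights_sum_to_one (k N : ℕ) (hk : 1 ≤ k) (n : Fin k → ℕ)
    (hn : ∑ i, n i = 2 * N) :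
    ∑ Γ ∈ Finset.univ.filter (fun Γ : Fin k → Fin k → Fin (2 * N + 1) =>
        (∀ i j, Γ i j = Γ j i) ∧ (∀ i, Even (Γ i i : ℕ)) ∧
        (∀ i, ∑ j, (Γ i j : ℕ) = n i)),
      ((∏ i, (n i).factorial : ℕ) : ℚ) /
        (((2 * N - 1)‼ *
          (∏ p ∈ Finset.univ.filter (fun p : Fin k × Fin k => p.1 < p.2),
            ((Γ p.1 p.2 : ℕ)).factorial) *
          ∏ i, ((Γ i i : ℕ))‼ : ℕ) : ℚ) = 1 := by
  exact aux k (2*N) N n le_rfl hn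
end

section
/- Let Γ = (γ_{ij}) be a symmetric k×k matrix of nonnegative integers with even diagonal entries and with row sums Σ_j γ_{ij} = n_i, where Σ_i n_i = 2N. Then the quantity 2^N N! n₁!⋯n_k! / (∏_{i<j} γ_{ij}! · ∏_i (γ_{ii}/2)! · 2^{(tr Γ)/2}) is a positive integer. -/
open Finset

lemma double_dvd_factorial (a : ℕ) : 2 ^ a * a.factorial ∣ (2 * a).factorial := by
  rw [← Nat.doubleFactorial_two_mul]
  rcases a with _ | b
  · simp
  · have h : 2 * (b + 1) = (2 * b + 1) + 1 := by ring
    rw [h, Nat.factorial_eq_mul_doubleFactorial]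
    exact Dvd.intro _ rfl

theorem graph_class_size_is_integer (k N : ℕ) (Γ : Fin k → Fin k → ℕ)
    (hsymm : ∀ i j, Γ i j = Γ j i) (heven : ∀ i, Even (Γ i i))
    (n : Fin k → ℕ) (hrow : ∀ i, ∑ j, Γ i j = n i) (htot : ∑ i, n i = 2 * N) :
    ∃ c : ℕ, 0 < c ∧
      2 ^ N * N.factorial * ∏ i, (n i).factorial =
        c * ((∏ p ∈ Finset.univ.filter (fun p : Fin k × Fin k => p.1 < p.2),
                (Γ p.1 p.2).factorial) *
             (∏ i, (Γ i i / 2).factorial) * 2 ^ ((∑ i, Γ i i) / 2)) := by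
  set D : ℕ := (∏ p ∈ Finset.univ.filter (fun p : Fin k × Fin k => p.1 < p.2),
                (Γ p.1 p.2).factorial) *
             (∏ i, (Γ i i / 2).factorial) * 2 ^ ((∑ i, Γ i i) / 2) with hD
  -- rewrite the power of 2 as a product
  have hsum2 : (∑ i, Γ i i) / 2 = ∑ i, Γ i i / 2 := by
    rw [Nat.sum_div]
    intro i _
    exact (heven i).two_dvd
  have hdiag : ∀ i : Fin k, (Γ i i / 2).factorial * 2 ^ (Γ i i / 2) ∣ (Γ i i).factorial := by
    intro i
    obtain ⟨a, ha⟩ := heven i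
    have : Γ i i = 2 * a := by omega
    rw [this]
    simpa [Nat.mul_div_cancel_left a (by norm_num : 0 < 2), mul_comm] using
      double_dvd_factorial a
  -- D divides the product over the "≤" pairs
  have hDdvd1 : D ∣ ∏ p ∈ Finset.univ.filter (fun p : Fin k × Fin k => p.1 ≤ p.2),
      (Γ p.1 p.2).factorial := by
    have hsplit : (Finset.univ.filter (fun p : Fin k × Fin k => p.1 ≤ p.2)) =
        (Finset.univ.filter (fun p : Fin k × Fin k => p.1 < p.2)) ∪
        (Finset.univ.filter (fun p : Fin k × Fin k => p.1 = p.2)) := by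
      ext p
      simp [le_iff_lt_or_eq]
    have hdisj : Disjoint (Finset.univ.filter (fun p : Fin k × Fin k => p.1 < p.2))
        (Finset.univ.filter (fun p : Fin k × Fin k => p.1 = p.2)) := by
      rw [Finset.disjoint_filter]
      intro p _ h h'
      exact absurd h' (ne_of_lt h)
    rw [hsplit, Finset.prod_union hdisj, hD, mul_assoc]
    apply mul_dvd_mul dvd_rfl
    have hdiagprod : ∏ p ∈ Finset.univ.filter (fun p : Fin k × Fin k => p.1 = p.2),
        (Γ p.1 p.2).factorial = ∏ i, (Γ i i).factorial := by
      apply Finset.prod_nbij' (fun p => p.1) (fun i => (i, i))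
      · intro p hp; simp
      · intro i _; simp
      · intro p hp
        simp only [Finset.mem_filter] at hp
        exact Prod.ext rfl hp.2
      · intro i _; rfl
      · intro p hp
        simp only [Finset.mem_filter] at hp
        rw [hp.2]
    rw [hdiagprod, hsum2, ← Finset.prod_pow_eq_pow_sum, ← Finset.prod_mul_distrib]
    exact Finset.prod_dvd_prod_of_dvd _ _ fun i _ => hdiag i
  have hDdvd2 : (∏ p ∈ Finset.univ.filter (fun p : Fin k × Fin k => p.1 ≤ p.2),
      (Γ p.1 p.2).factorial) ∣ ∏ p ∈ (Finset.univ : Finset (Fin k × Fin k)),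
      (Γ p.1 p.2).factorial :=
    Finset.prod_dvd_prod_of_subset _ _ _ (Finset.filter_subset _ _)
  have hDdvd3 : (∏ p ∈ (Finset.univ : Finset (Fin k × Fin k)),
      (Γ p.1 p.2).factorial) ∣ ∏ i, (n i).factorial := by
    rw [← Finset.univ_product_univ, Finset.prod_product]
    apply Finset.prod_dvd_prod_of_dvd
    intro i _
    rw [← hrow i]
    exact Nat.prod_factorial_dvd_factorial_sum _ _
  have hDdvd : D ∣ ∏ i, (n i).factorial := hDdvd1.trans (hDdvd2.trans hDdvd3)
  have hDpos : 0 < D := by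
    apply Nat.mul_pos
    apply Nat.mul_pos
    · exact Finset.prod_pos fun p _ => Nat.factorial_pos _
    · exact Finset.prod_pos fun i _ => Nat.factorial_pos _
    · exact Nat.pow_pos (by norm_num)
  refine ⟨2 ^ N * N.factorial * ((∏ i, (n i).factorial) / D), ?_, ?_⟩
  · apply Nat.mul_pos
    apply Nat.mul_pos
    · exact Nat.pow_pos (by norm_num)
    · exact Nat.factorial_pos _
    · exact Nat.div_pos (Nat.le_of_dvd (Finset.prod_pos fun i _ => Nat.factorial_pos _) hDdvd)
        hDpos
  · rw [mul_assoc (2 ^ N * N.factorial), Nat.div_mul_cancel hDdvd]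
end

section
/- Let A and B be symmetric trilinear forms on ℝⁿ (elements of V₃) and Q a symmetric positive bilinear form on the dual, with τ the contraction operator (τT)_{ν₁…ν_m} = Q^{αβ} T_{αβν₁…ν_m}, and let A ∨ B = Sym(A ⊗ B). Then τ³(A∨B) = (1/5)(3 T₍₁₎ + 2 T₍₂₎), where T₍₁₎ = Q^{ab}A_{abm} Q^{cd}B_{cdn} Q^{mn} and T₍₂₎ = A_{abc}B_{def}Q^{ad}Q^{be}Q^{cf}. -/
open Finset

def pp : Fin 6 → Fin 6 := ![1,0,3,2,5,4]
def pr : Fin 6 → Fin 3 := ![0,0,1,1,2,2]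
def tr : Fin 3 → Fin 6 := ![0,2,4]
def c2f : Fin 6 → Fin 6 := ![0,2,4,1,3,5]

def cnd (φ : Equiv.Perm (Fin 6)) : Prop :=
  ∃ i : Fin 6, ∃ j : Fin 6, i < 3 ∧ j < 3 ∧ i ≠ j ∧ φ j = pp (φ i)

instance : DecidablePred cnd := fun φ => by unfold cnd; infer_instance

lemma sum_pi_succ (n m : ℕ) (G : (Fin (m+1) → Fin n) → ℝ) :
    ∑ v : Fin (m+1) → Fin n, G v = ∑ x : Fin n, ∑ w : Fin m → Fin n, G (Fin.cons x w) := by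
  rw [← (Fin.consEquiv (fun _ => Fin n)).sum_comp, Fintype.sum_prod_type]; rfl

lemma sum6 (n : ℕ) (F : Fin n → Fin n → Fin n → Fin n → Fin n → Fin n → ℝ) :
    ∑ v : Fin 6 → Fin n, F (v 0) (v 1) (v 2) (v 3) (v 4) (v 5) =
      ∑ a : Fin n, ∑ b : Fin n, ∑ c : Fin n, ∑ d : Fin n, ∑ e : Fin n, ∑ f : Fin n,
        F a b c d e f := by
  simp only [sum_pi_succ, Fintype.sum_unique]; rfl

lemma reindex (n : ℕ) (e : Equiv.Perm (Fin 6)) (G : (Fin 6 → Fin n) → ℝ) :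
    ∑ v : Fin 6 → Fin n, G (v ∘ e) = ∑ v : Fin 6 → Fin n, G v :=
  Equiv.sum_comp (Equiv.arrowCongr e.symm (Equiv.refl (Fin n))) G

lemma qprod (q : Fin 6 → Fin 6 → ℝ) (hq : ∀ i j, q i j = q j i)
    (h : Fin 6 → Fin 6) (hinj : Function.Injective h) (hp : ∀ i, h (pp i) = pp (h i)) :
    q (h 0) (h 1) * q (h 2) (h 3) * q (h 4) (h 5) = q 0 1 * q 2 3 * q 4 5 := by
  have key : ∀ u v : Fin 6, pr u = pr v → u = v ∨ u = pp v := by decide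
  have tppt : ∀ a b : Fin 3, tr a ≠ pp (tr b) := by decide
  have trinj : Function.Injective tr := by decide
  have hP : ∀ i : Fin 6, q i (pp i) = (fun k => q (tr k) (pp (tr k))) (pr i) := by
    intro i; fin_cases i <;> first | rfl | exact hq _ _
  have e1 : h 1 = pp (h 0) := hp 0
  have e3 : h 3 = pp (h 2) := hp 2
  have e5 : h 5 = pp (h 4) := hp 4
  have hπinj : Function.Injective (fun k : Fin 3 => pr (h (tr k))) := by
    intro a b hab
    rcases key _ _ hab with e | e
    · exact trinj (hinj e)
    · rw [← hp] at e; exact absurd (hinj e) (tppt a b)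
  rw [e1, e3, e5, hP (h 0), hP (h 2), hP (h 4)]
  have h2 := Equiv.prod_comp
    (Equiv.ofBijective _ (Finite.injective_iff_bijective.mp hπinj))
    (fun k => q (tr k) (pp (tr k)))
  rw [Fin.prod_univ_three, Fin.prod_univ_three] at h2
  exact h2

noncomputable def ff (n : ℕ) (A B : Fin n → Fin n → Fin n → ℝ)
    (Q : Matrix (Fin n) (Fin n) ℝ) (g : Fin 6 → Fin 6) : ℝ :=
  ∑ v : Fin 6 → Fin n,
    Q (v 0) (v 1) * Q (v 2) (v 3) * Q (v 4) (v 5) *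
      (A (v (g 0)) (v (g 1)) (v (g 2)) * B (v (g 3)) (v (g 4)) (v (g 5)))

lemma I2 (n : ℕ) (A B : Fin n → Fin n → Fin n → ℝ) (Q : Matrix (Fin n) (Fin n) ℝ)
    (hQ : Q.IsSymm) (h g : Fin 6 → Fin 6) (hinj : Function.Injective h)
    (hp : ∀ i, h (pp i) = pp (h i)) :
    ff n A B Q (fun i => h (g i)) = ff n A B Q g := by
  have hb : Function.Bijective h := Finite.injective_iff_bijective.mp hinj
  calc ff n A B Q (fun i => h (g i))
      = ∑ v : Fin 6 → Fin n,
          (fun v : Fin 6 → Fin n =>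
            Q (v 0) (v 1) * Q (v 2) (v 3) * Q (v 4) (v 5) *
              (A (v (g 0)) (v (g 1)) (v (g 2)) * B (v (g 3)) (v (g 4)) (v (g 5))))
            (v ∘ (Equiv.ofBijective h hb)) := by
        unfold ff
        apply Finset.sum_congr rfl
        intro v _
        show Q (v 0) (v 1) * Q (v 2) (v 3) * Q (v 4) (v 5) *
              (A (v (h (g 0))) (v (h (g 1))) (v (h (g 2))) *
                B (v (h (g 3))) (v (h (g 4))) (v (h (g 5)))) =
            Q (v (h 0)) (v (h 1)) * Q (v (h 2)) (v (h 3)) * Q (v (h 4)) (v (h 5)) *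
              (A (v (h (g 0))) (v (h (g 1))) (v (h (g 2))) *
                B (v (h (g 3))) (v (h (g 4))) (v (h (g 5))))
        rw [qprod (fun i j => Q (v i) (v j)) (fun i j => hQ.apply (v j) (v i)) h hinj hp]
    _ = ∑ v : Fin 6 → Fin n,
          (fun v : Fin 6 → Fin n =>
            Q (v 0) (v 1) * Q (v 2) (v 3) * Q (v 4) (v 5) *
              (A (v (g 0)) (v (g 1)) (v (g 2)) * B (v (g 3)) (v (g 4)) (v (g 5)))) v :=
        reindex n (Equiv.ofBijective h hb) (fun v : Fin 6 → Fin n =>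
            Q (v 0) (v 1) * Q (v 2) (v 3) * Q (v 4) (v 5) *
              (A (v (g 0)) (v (g 1)) (v (g 2)) * B (v (g 3)) (v (g 4)) (v (g 5))))
    _ = ff n A B Q g := rfl

set_option synthInstance.maxSize 2000 in
lemma tri_lo (n : ℕ) (C : Fin n → Fin n → Fin n → ℝ)
    (hC : ∀ i j l, C i j l = C j i l ∧ C i j l = C i l j)
    (u : Fin 6 → Fin n) (i j k : Fin 6) (hi : i < 3) (hj : j < 3) (hk : k < 3)
    (hij : i ≠ j) (hik : i ≠ k) (hjk : j ≠ k) :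
    C (u i) (u j) (u k) = C (u 0) (u 1) (u 2) := by
  have c213 : ∀ x y z, C x y z = C y x z := fun x y z => (hC x y z).1
  have c132 : ∀ x y z, C x y z = C x z y := fun x y z => (hC x y z).2
  have c231 : ∀ x y z, C x y z = C y z x := fun x y z => (c213 x y z).trans (c132 y x z)
  have c312 : ∀ x y z, C x y z = C z x y := fun x y z => (c132 x y z).trans (c213 x z y)
  have c321 : ∀ x y z, C x y z = C z y x :=
    fun x y z => ((c213 x y z).trans (c132 y x z)).trans (c213 y z x)
  have cases6 : ∀ i j k : Fin 6, i < 3 → j < 3 → k < 3 → i ≠ j → i ≠ k → j ≠ k →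
      (i = 0 ∧ j = 1 ∧ k = 2) ∨ (i = 0 ∧ j = 2 ∧ k = 1) ∨ (i = 1 ∧ j = 0 ∧ k = 2) ∨
      (i = 1 ∧ j = 2 ∧ k = 0) ∨ (i = 2 ∧ j = 0 ∧ k = 1) ∨ (i = 2 ∧ j = 1 ∧ k = 0) := by
    decide
  rcases cases6 i j k hi hj hk hij hik hjk with
    ⟨rfl, rfl, rfl⟩ | ⟨rfl, rfl, rfl⟩ | ⟨rfl, rfl, rfl⟩ | ⟨rfl, rfl, rfl⟩ |
    ⟨rfl, rfl, rfl⟩ | ⟨rfl, rfl, rfl⟩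
  · rfl
  · exact (c132 _ _ _).symm
  · exact (c213 _ _ _).symm
  · exact (c231 _ _ _).symm
  · exact (c312 _ _ _).symm
  · exact (c321 _ _ _).symm

set_option synthInstance.maxSize 2000 in
lemma tri_hi (n : ℕ) (C : Fin n → Fin n → Fin n → ℝ)
    (hC : ∀ i j l, C i j l = C j i l ∧ C i j l = C i l j)
    (u : Fin 6 → Fin n) (i j k : Fin 6) (hi : ¬ i < 3) (hj : ¬ j < 3) (hk : ¬ k < 3)
    (hij : i ≠ j) (hik : i ≠ k) (hjk : j ≠ k) :
    C (u i) (u j) (u k) = C (u 3) (u 4) (u 5) := by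
  have c213 : ∀ x y z, C x y z = C y x z := fun x y z => (hC x y z).1
  have c132 : ∀ x y z, C x y z = C x z y := fun x y z => (hC x y z).2
  have c231 : ∀ x y z, C x y z = C y z x := fun x y z => (c213 x y z).trans (c132 y x z)
  have c312 : ∀ x y z, C x y z = C z x y := fun x y z => (c132 x y z).trans (c213 x z y)
  have c321 : ∀ x y z, C x y z = C z y x :=
    fun x y z => ((c213 x y z).trans (c132 y x z)).trans (c213 y z x)
  have cases6 : ∀ i j k : Fin 6, ¬ i < 3 → ¬ j < 3 → ¬ k < 3 → i ≠ j → i ≠ k → j ≠ k →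
      (i = 3 ∧ j = 4 ∧ k = 5) ∨ (i = 3 ∧ j = 5 ∧ k = 4) ∨ (i = 4 ∧ j = 3 ∧ k = 5) ∨
      (i = 4 ∧ j = 5 ∧ k = 3) ∨ (i = 5 ∧ j = 3 ∧ k = 4) ∨ (i = 5 ∧ j = 4 ∧ k = 3) := by
    decide
  rcases cases6 i j k hi hj hk hij hik hjk with
    ⟨rfl, rfl, rfl⟩ | ⟨rfl, rfl, rfl⟩ | ⟨rfl, rfl, rfl⟩ | ⟨rfl, rfl, rfl⟩ |
    ⟨rfl, rfl, rfl⟩ | ⟨rfl, rfl, rfl⟩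
  · rfl
  · exact (c132 _ _ _).symm
  · exact (c213 _ _ _).symm
  · exact (c231 _ _ _).symm
  · exact (c312 _ _ _).symm
  · exact (c321 _ _ _).symm

lemma inj6 (x : Fin 6 → Fin 6)
    (d01 : x 0 ≠ x 1) (d02 : x 0 ≠ x 2) (d03 : x 0 ≠ x 3) (d04 : x 0 ≠ x 4) (d05 : x 0 ≠ x 5)
    (d12 : x 1 ≠ x 2) (d13 : x 1 ≠ x 3) (d14 : x 1 ≠ x 4) (d15 : x 1 ≠ x 5)
    (d23 : x 2 ≠ x 3) (d24 : x 2 ≠ x 4) (d25 : x 2 ≠ x 5)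
    (d34 : x 3 ≠ x 4) (d35 : x 3 ≠ x 5) (d45 : x 4 ≠ x 5) : Function.Injective x := by
  intro a b e
  fin_cases a <;> fin_cases b <;>
    first
      | rfl
      | exact absurd e d01 | exact absurd e.symm d01
      | exact absurd e d02 | exact absurd e.symm d02
      | exact absurd e d03 | exact absurd e.symm d03
      | exact absurd e d04 | exact absurd e.symm d04
      | exact absurd e d05 | exact absurd e.symm d05
      | exact absurd e d12 | exact absurd e.symm d12
      | exact absurd e d13 | exact absurd e.symm d13
      | exact absurd e d14 | exact absurd e.symm d14
      | exact absurd e d15 | exact absurd e.symm d15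
      | exact absurd e d23 | exact absurd e.symm d23
      | exact absurd e d24 | exact absurd e.symm d24
      | exact absurd e d25 | exact absurd e.symm d25
      | exact absurd e d34 | exact absurd e.symm d34
      | exact absurd e d35 | exact absurd e.symm d35
      | exact absurd e d45 | exact absurd e.symm d45

lemma classify_pos (n : ℕ) (A B : Fin n → Fin n → Fin n → ℝ)
    (hA : ∀ i j l, A i j l = A j i l ∧ A i j l = A i l j)
    (hB : ∀ i j l, B i j l = B j i l ∧ B i j l = B i l j)
    (Q : Matrix (Fin n) (Fin n) ℝ) (hQ : Q.IsSymm)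
    (φ : Equiv.Perm (Fin 6)) (hc : cnd φ) :
    ff n A B Q ⇑φ = ff n A B Q id := by
  obtain ⟨i, j, hi, hj, hij, hφ⟩ := hc
  have ppne : ∀ x : Fin 6, pp x ≠ x := by decide
  have ppinvol : ∀ x : Fin 6, pp (pp x) = x := by decide
  have hi' : i.val < 3 := hi
  have hj' : j.val < 3 := hj
  have hij' : i.val ≠ j.val := fun h => hij (Fin.ext h)
  have hkbound : 3 - i.val - j.val < 6 := by omega
  set k : Fin 6 := ⟨3 - i.val - j.val, hkbound⟩ with hkdef
  have hk' : k.val < 3 := by show 3 - i.val - j.val < 3; omega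
  have hki' : k.val ≠ i.val := by show 3 - i.val - j.val ≠ i.val; omega
  have hkj' : k.val ≠ j.val := by show 3 - i.val - j.val ≠ j.val; omega
  have hk : k < 3 := hk'
  have hik : i ≠ k := fun e => hki' (congrArg Fin.val e).symm
  have hjk : j ≠ k := fun e => hkj' (congrArg Fin.val e).symm
  set m : Fin 6 := φ.symm (pp (φ k)) with hmdef
  have hm : φ m = pp (φ k) := φ.apply_symm_apply _
  have hmk : m ≠ k := by intro e; rw [e] at hm; exact ppne _ hm.symm
  have hmi : m ≠ i := by
    intro e; rw [e] at hm
    have h2 : φ j = φ k := by rw [hφ, hm, ppinvol]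
    exact hjk (φ.injective h2)
  have hmj : m ≠ j := by
    intro e; rw [e] at hm; rw [hφ] at hm
    have h2 : φ i = φ k := by
      have h3 := congrArg pp hm; rwa [ppinvol, ppinvol] at h3
    exact hik (φ.injective h2)
  have hm3 : ¬ m < 3 := by
    intro hlt
    have hm' : m.val < 3 := hlt
    have h1 : m.val ≠ i.val := fun h => hmi (Fin.ext h)
    have h2 : m.val ≠ j.val := fun h => hmj (Fin.ext h)
    have h3 : m.val ≠ k.val := fun h => hmk (Fin.ext h)
    omega
  set l1 : Fin 6 := if m = 3 then 4 else 3 with hl1def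
  have hl13 : ¬ l1 < 3 := by
    by_cases e : m = 3
    · rw [hl1def, if_pos e]; decide
    · rw [hl1def, if_neg e]; decide
  have hl1m : l1 ≠ m := by
    by_cases e : m = 3
    · rw [hl1def, if_pos e, e]; decide
    · rw [hl1def, if_neg e]; exact fun h => e h.symm
  set l2 : Fin 6 := φ.symm (pp (φ l1)) with hl2def
  have hl2 : φ l2 = pp (φ l1) := φ.apply_symm_apply _
  have hl2l1 : l2 ≠ l1 := by intro e; rw [e] at hl2; exact ppne _ hl2.symm
  have hjl1 : j ≠ l1 := fun e => hl13 (e ▸ hj)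
  have hil1 : i ≠ l1 := fun e => hl13 (e ▸ hi)
  have hkl1 : k ≠ l1 := fun e => hl13 (e ▸ hk)
  have hl2i : l2 ≠ i := by
    intro e; rw [e] at hl2
    have h1 : pp (φ i) = φ l1 := by
      have h3 := congrArg pp hl2; rwa [ppinvol] at h3
    have h2 : φ j = φ l1 := by rw [hφ, h1]
    exact hjl1 (φ.injective h2)
  have hl2j : l2 ≠ j := by
    intro e; rw [e] at hl2; rw [hφ] at hl2
    have h2 : φ i = φ l1 := by
      have h3 := congrArg pp hl2; rwa [ppinvol, ppinvol] at h3
    exact hil1 (φ.injective h2)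
  have hl2k : l2 ≠ k := by
    intro e; rw [e] at hl2
    have h3 := congrArg pp hl2; rw [ppinvol] at h3
    have h2 : φ m = φ l1 := hm.trans h3
    exact hl1m (φ.injective h2).symm
  have hl2m : l2 ≠ m := by
    intro e; rw [e] at hl2
    have h2 : pp (φ k) = pp (φ l1) := hm.symm.trans hl2
    have h3 := congrArg pp h2; rw [ppinvol, ppinvol] at h3
    exact hkl1 (φ.injective h3)
  have hl23 : ¬ l2 < 3 := by
    intro hlt
    have hl2' : l2.val < 3 := hlt
    have h1 : l2.val ≠ i.val := fun h => hl2i (Fin.ext h)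
    have h2 : l2.val ≠ j.val := fun h => hl2j (Fin.ext h)
    have h3 : l2.val ≠ k.val := fun h => hl2k (Fin.ext h)
    omega
  have nef : ∀ {a b : Fin 6}, a ≠ b → φ a ≠ φ b := fun hab e => hab (φ.injective e)
  have hinj : Function.Injective ![φ i, φ j, φ k, φ m, φ l1, φ l2] :=
    inj6 _ (nef hij) (nef hik) (nef (fun e => hmi e.symm)) (nef hil1) (nef (fun e => hl2i e.symm))
      (nef hjk) (nef (fun e => hmj e.symm)) (nef hjl1) (nef (fun e => hl2j e.symm))
      (nef (fun e => hmk e.symm)) (nef hkl1) (nef (fun e => hl2k e.symm))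
      (nef (fun e => hl1m e.symm)) (nef (fun e => hl2m e.symm)) (nef (fun e => hl2l1 e.symm))
  have hpairs : ∀ x, ![φ i, φ j, φ k, φ m, φ l1, φ l2] (pp x) =
      pp (![φ i, φ j, φ k, φ m, φ l1, φ l2] x) := by
    intro x; fin_cases x
    · exact hφ
    · show φ i = pp (φ j); rw [hφ, ppinvol]
    · exact hm
    · show φ k = pp (φ m); rw [hm, ppinvol]
    · exact hl2
    · show φ l1 = pp (φ l2); rw [hl2, ppinvol]
  have step1 : ff n A B Q ⇑φ = ff n A B Q ![φ i, φ j, φ k, φ m, φ l1, φ l2] := by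
    unfold ff
    apply Finset.sum_congr rfl
    intro v _
    have eA : A (v (φ i)) (v (φ j)) (v (φ k)) = A (v (φ 0)) (v (φ 1)) (v (φ 2)) :=
      tri_lo n A hA (fun x => v (φ x)) i j k hi hj hk hij hik hjk
    have eB : B (v (φ m)) (v (φ l1)) (v (φ l2)) = B (v (φ 3)) (v (φ 4)) (v (φ 5)) :=
      tri_hi n B hB (fun x => v (φ x)) m l1 l2 hm3 hl13 hl23
        (fun e => hl1m e.symm) (fun e => hl2m e.symm) (fun e => hl2l1 e.symm)
    show Q (v 0) (v 1) * Q (v 2) (v 3) * Q (v 4) (v 5) *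
        (A (v (φ 0)) (v (φ 1)) (v (φ 2)) * B (v (φ 3)) (v (φ 4)) (v (φ 5))) =
      Q (v 0) (v 1) * Q (v 2) (v 3) * Q (v 4) (v 5) *
        (A (v (φ i)) (v (φ j)) (v (φ k)) * B (v (φ m)) (v (φ l1)) (v (φ l2)))
    rw [eA, eB]
  have step2 : ff n A B Q ![φ i, φ j, φ k, φ m, φ l1, φ l2] = ff n A B Q id :=
    I2 n A B Q hQ ![φ i, φ j, φ k, φ m, φ l1, φ l2] id hinj hpairs
  rw [step1, step2]

lemma classify_neg (n : ℕ) (A B : Fin n → Fin n → Fin n → ℝ)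
    (hA : ∀ i j l, A i j l = A j i l ∧ A i j l = A i l j)
    (hB : ∀ i j l, B i j l = B j i l ∧ B i j l = B i l j)
    (Q : Matrix (Fin n) (Fin n) ℝ) (hQ : Q.IsSymm)
    (φ : Equiv.Perm (Fin 6)) (hnc : ¬ cnd φ) :
    ff n A B Q ⇑φ = ff n A B Q c2f := by
  have ppne : ∀ x : Fin 6, pp x ≠ x := by decide
  have ppinvol : ∀ x : Fin 6, pp (pp x) = x := by decide
  have hno : ∀ a b : Fin 6, a < 3 → b < 3 → a ≠ b → φ b ≠ pp (φ a) :=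
    fun a b ha hb hab e => hnc ⟨a, b, ha, hb, hab, e⟩
  have nef : ∀ {a b : Fin 6}, a ≠ b → φ a ≠ φ b := fun hab e => hab (φ.injective e)
  have lp : ∀ t : Fin 6, ¬ t < 3 → φ.symm (pp (φ t)) < 3 := by
    intro t ht
    by_contra hu
    set u : Fin 6 := φ.symm (pp (φ t)) with hudef
    have hφu : φ u = pp (φ t) := φ.apply_symm_apply _
    have hut : u ≠ t := by intro e; rw [e] at hφu; exact ppne _ hφu.symm
    have ht' : 3 ≤ t.val := not_lt.mp ht
    have hu' : 3 ≤ u.val := not_lt.mp hu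
    have hut' : u.val ≠ t.val := fun h => hut (Fin.ext h)
    have hwbound : 12 - t.val - u.val < 6 := by omega
    set w : Fin 6 := ⟨12 - t.val - u.val, hwbound⟩ with hwdef
    have hw' : 3 ≤ w.val := by show 3 ≤ 12 - t.val - u.val; omega
    have hwt' : w.val ≠ t.val := by show 12 - t.val - u.val ≠ t.val; omega
    have hwu' : w.val ≠ u.val := by show 12 - t.val - u.val ≠ u.val; omega
    have hwt : w ≠ t := fun e => hwt' (congrArg Fin.val e)
    have hwu : w ≠ u := fun e => hwu' (congrArg Fin.val e)
    set z : Fin 6 := φ.symm (pp (φ w)) with hzdef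
    have hφz : φ z = pp (φ w) := φ.apply_symm_apply _
    have hzw : z ≠ w := by intro e; rw [e] at hφz; exact ppne _ hφz.symm
    have hzt : z ≠ t := by
      intro e; rw [e] at hφz
      have h3 := congrArg pp hφz; rw [ppinvol] at h3
      have h2 : φ u = φ w := hφu.trans h3
      exact hwu (φ.injective h2).symm
    have hzu : z ≠ u := by
      intro e; rw [e] at hφz
      have h2 : pp (φ t) = pp (φ w) := hφu.symm.trans hφz
      have h3 := congrArg pp h2; rw [ppinvol, ppinvol] at h3
      exact hwt (φ.injective h3).symm
    have hz3 : z < 3 := by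
      by_contra hz
      have hz' : 3 ≤ z.val := not_lt.mp hz
      have h1 : z.val ≠ t.val := fun h => hzt (Fin.ext h)
      have h2 : z.val ≠ u.val := fun h => hzu (Fin.ext h)
      have h3 : z.val ≠ w.val := fun h => hzw (Fin.ext h)
      have : z.val < 6 := z.isLt
      have : t.val < 6 := t.isLt
      have : u.val < 6 := u.isLt
      have : w.val < 6 := w.isLt
      omega
    set a : Fin 6 := if z = 0 then 1 else 0 with hadef
    have ha3 : a < 3 := by
      by_cases e : z = 0
      · rw [hadef, if_pos e]; decide
      · rw [hadef, if_neg e]; decide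
    have haz : a ≠ z := by
      by_cases e : z = 0
      · rw [hadef, if_pos e, e]; decide
      · rw [hadef, if_neg e]; exact fun h => e h.symm
    set y : Fin 6 := φ.symm (pp (φ a)) with hydef
    have hφy : φ y = pp (φ a) := φ.apply_symm_apply _
    have hya : y ≠ a := by intro e; rw [e] at hφy; exact ppne _ hφy.symm
    have hyt : y ≠ t := by
      intro e; rw [e] at hφy
      have h3 := congrArg pp hφy; rw [ppinvol] at h3
      have h2 : φ u = φ a := hφu.trans h3
      exact absurd (congrArg Fin.val (φ.injective h2)) (by
        have : a.val < 3 := ha3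
        omega)
    have hyu : y ≠ u := by
      intro e; rw [e] at hφy
      have h2 : pp (φ t) = pp (φ a) := hφu.symm.trans hφy
      have h3 := congrArg pp h2; rw [ppinvol, ppinvol] at h3
      exact absurd (congrArg Fin.val (φ.injective h3)) (by
        have : a.val < 3 := ha3
        omega)
    have hyw : y ≠ w := by
      intro e; rw [e] at hφy
      have h3 := congrArg pp hφy; rw [ppinvol] at h3
      have h2 : φ z = φ a := hφz.trans h3
      exact haz (φ.injective h2).symm
    have hy3 : y < 3 := by
      by_contra hy
      have hy' : 3 ≤ y.val := not_lt.mp hy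
      have h1 : y.val ≠ t.val := fun h => hyt (Fin.ext h)
      have h2 : y.val ≠ u.val := fun h => hyu (Fin.ext h)
      have h3 : y.val ≠ w.val := fun h => hyw (Fin.ext h)
      have : y.val < 6 := y.isLt
      have : t.val < 6 := t.isLt
      have : u.val < 6 := u.isLt
      have : w.val < 6 := w.isLt
      omega
    exact hno a y ha3 hy3 (fun e => hya e.symm) hφy
  -- the s-indices
  set s3 : Fin 6 := φ.symm (pp (φ 3)) with hs3def
  set s4 : Fin 6 := φ.symm (pp (φ 4)) with hs4def
  set s5 : Fin 6 := φ.symm (pp (φ 5)) with hs5def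
  have hs3 : φ s3 = pp (φ 3) := φ.apply_symm_apply _
  have hs4 : φ s4 = pp (φ 4) := φ.apply_symm_apply _
  have hs5 : φ s5 = pp (φ 5) := φ.apply_symm_apply _
  have hs3lt : s3 < 3 := lp 3 (by decide)
  have hs4lt : s4 < 3 := lp 4 (by decide)
  have hs5lt : s5 < 3 := lp 5 (by decide)
  have ppinj : ∀ {x y : Fin 6}, pp x = pp y → x = y := by
    intro x y e
    have h3 := congrArg pp e; rwa [ppinvol, ppinvol] at h3
  have hs34 : s3 ≠ s4 := by
    intro e
    have h2 : pp (φ 3) = pp (φ 4) := by rw [← hs3, ← hs4, e]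
    exact absurd (φ.injective (ppinj h2)) (by decide)
  have hs35 : s3 ≠ s5 := by
    intro e
    have h2 : pp (φ 3) = pp (φ 5) := by rw [← hs3, ← hs5, e]
    exact absurd (φ.injective (ppinj h2)) (by decide)
  have hs45 : s4 ≠ s5 := by
    intro e
    have h2 : pp (φ 4) = pp (φ 5) := by rw [← hs4, ← hs5, e]
    exact absurd (φ.injective (ppinj h2)) (by decide)
  -- the pair-preserving h
  have d051 : (0:Fin 6) ≠ 1 := by decide
  have d052 : (0:Fin 6) ≠ 2 := by decide
  have d152 : (1:Fin 6) ≠ 2 := by decide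
  have hinj : Function.Injective ![φ 0, pp (φ 0), φ 1, pp (φ 1), φ 2, pp (φ 2)] :=
    inj6 _
      (fun e => ppne _ e.symm)
      (nef d051)
      (hno 1 0 (by decide) (by decide) (by decide))
      (nef d052)
      (hno 2 0 (by decide) (by decide) (by decide))
      ((hno 0 1 (by decide) (by decide) (by decide)).symm)
      (fun e => nef d051 (ppinj e))
      ((hno 0 2 (by decide) (by decide) (by decide)).symm)
      (fun e => nef d052 (ppinj e))
      (fun e => ppne _ e.symm)
      (nef d152)
      (hno 2 1 (by decide) (by decide) (by decide))
      ((hno 1 2 (by decide) (by decide) (by decide)).symm)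
      (fun e => nef d152 (ppinj e))
      (fun e => ppne _ e.symm)
  have hpairs : ∀ x, ![φ 0, pp (φ 0), φ 1, pp (φ 1), φ 2, pp (φ 2)] (pp x) =
      pp (![φ 0, pp (φ 0), φ 1, pp (φ 1), φ 2, pp (φ 2)] x) := by
    intro x; fin_cases x
    · rfl
    · exact (ppinvol (φ 0)).symm
    · rfl
    · exact (ppinvol (φ 1)).symm
    · rfl
    · exact (ppinvol (φ 2)).symm
  have r3 := congrArg pp hs3
  have r4 := congrArg pp hs4
  have r5 := congrArg pp hs5
  rw [ppinvol] at r3 r4 r5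
  have step1 : ff n A B Q ⇑φ =
      ff n A B Q (fun x => ![φ 0, pp (φ 0), φ 1, pp (φ 1), φ 2, pp (φ 2)] (c2f x)) := by
    unfold ff
    apply Finset.sum_congr rfl
    intro v _
    have eB : B (v (φ 3)) (v (φ 4)) (v (φ 5)) =
        B (v (pp (φ 0))) (v (pp (φ 1))) (v (pp (φ 2))) := by
      rw [← r3, ← r4, ← r5]
      exact tri_lo n B hB (fun s => v (pp (φ s))) s3 s4 s5 hs3lt hs4lt hs5lt hs34 hs35 hs45
    show Q (v 0) (v 1) * Q (v 2) (v 3) * Q (v 4) (v 5) *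
        (A (v (φ 0)) (v (φ 1)) (v (φ 2)) * B (v (φ 3)) (v (φ 4)) (v (φ 5))) =
      Q (v 0) (v 1) * Q (v 2) (v 3) * Q (v 4) (v 5) *
        (A (v (φ 0)) (v (φ 1)) (v (φ 2)) * B (v (pp (φ 0))) (v (pp (φ 1))) (v (pp (φ 2))))
    rw [eB]
  have step2 : ff n A B Q
      (fun x => ![φ 0, pp (φ 0), φ 1, pp (φ 1), φ 2, pp (φ 2)] (c2f x)) = ff n A B Q c2f :=
    I2 n A B Q hQ ![φ 0, pp (φ 0), φ 1, pp (φ 1), φ 2, pp (φ 2)] c2f hinj hpairs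
  rw [step1, step2]

noncomputable def sig1 : Equiv.Perm (Fin 6) := Equiv.ofBijective ![0,1,2,4,5,3] (by decide)
noncomputable def sig2 : Equiv.Perm (Fin 6) := Equiv.ofBijective ![0,2,4,1,3,5] (by decide)

lemma feval1 (n : ℕ) (A B : Fin n → Fin n → Fin n → ℝ) (Q : Matrix (Fin n) (Fin n) ℝ)
    (hB : ∀ i j l, B i j l = B j i l ∧ B i j l = B i l j) :
    ff n A B Q id = ∑ a : Fin n, ∑ b : Fin n, ∑ m : Fin n, ∑ c : Fin n, ∑ d : Fin n, ∑ e : Fin n,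
      Q a b * A a b m * Q c d * B c d e * Q m e := by
  have rotB : ∀ x y z, B x y z = B y z x := fun x y z => ((hB x y z).1).trans ((hB y x z).2)
  calc ff n A B Q id
      = ∑ v : Fin 6 → Fin n, (fun v : Fin 6 → Fin n =>
          Q (v 0) (v 1) * A (v 0) (v 1) (v 2) * Q (v 3) (v 4) * B (v 3) (v 4) (v 5) *
            Q (v 2) (v 5)) (v ∘ ⇑sig1) := by
        unfold ff
        apply Finset.sum_congr rfl
        intro v _
        show Q (v 0) (v 1) * Q (v 2) (v 3) * Q (v 4) (v 5) *
            (A (v 0) (v 1) (v 2) * B (v 3) (v 4) (v 5)) =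
          Q (v 0) (v 1) * A (v 0) (v 1) (v 2) * Q (v 4) (v 5) * B (v 4) (v 5) (v 3) *
            Q (v 2) (v 3)
        rw [show B (v 4) (v 5) (v 3) = B (v 3) (v 4) (v 5) from (rotB (v 3) (v 4) (v 5)).symm]
        ring
    _ = ∑ v : Fin 6 → Fin n, (fun v : Fin 6 → Fin n =>
          Q (v 0) (v 1) * A (v 0) (v 1) (v 2) * Q (v 3) (v 4) * B (v 3) (v 4) (v 5) *
            Q (v 2) (v 5)) v :=
        reindex n sig1 (fun v : Fin 6 → Fin n =>
          Q (v 0) (v 1) * A (v 0) (v 1) (v 2) * Q (v 3) (v 4) * B (v 3) (v 4) (v 5) *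
            Q (v 2) (v 5))
    _ = _ := sum6 n (fun x0 x1 x2 x3 x4 x5 => Q x0 x1 * A x0 x1 x2 * Q x3 x4 * B x3 x4 x5 * Q x2 x5)

lemma feval2 (n : ℕ) (A B : Fin n → Fin n → Fin n → ℝ) (Q : Matrix (Fin n) (Fin n) ℝ) :
    ff n A B Q c2f = ∑ a : Fin n, ∑ b : Fin n, ∑ c : Fin n, ∑ d : Fin n, ∑ e : Fin n, ∑ f : Fin n,
      A a b c * B d e f * Q a d * Q b e * Q c f := by
  calc ff n A B Q c2f
      = ∑ v : Fin 6 → Fin n, (fun v : Fin 6 → Fin n =>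
          A (v 0) (v 1) (v 2) * B (v 3) (v 4) (v 5) * Q (v 0) (v 3) * Q (v 1) (v 4) *
            Q (v 2) (v 5)) (v ∘ ⇑sig2) := by
        unfold ff
        apply Finset.sum_congr rfl
        intro v _
        show Q (v 0) (v 1) * Q (v 2) (v 3) * Q (v 4) (v 5) *
            (A (v 0) (v 2) (v 4) * B (v 1) (v 3) (v 5)) =
          A (v 0) (v 2) (v 4) * B (v 1) (v 3) (v 5) * Q (v 0) (v 1) * Q (v 2) (v 3) * Q (v 4) (v 5)
        ring
    _ = ∑ v : Fin 6 → Fin n, (fun v : Fin 6 → Fin n =>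
          A (v 0) (v 1) (v 2) * B (v 3) (v 4) (v 5) * Q (v 0) (v 3) * Q (v 1) (v 4) *
            Q (v 2) (v 5)) v :=
        reindex n sig2 (fun v : Fin 6 → Fin n =>
          A (v 0) (v 1) (v 2) * B (v 3) (v 4) (v 5) * Q (v 0) (v 3) * Q (v 1) (v 4) *
            Q (v 2) (v 5))
    _ = _ := sum6 n (fun x0 x1 x2 x3 x4 x5 => A x0 x1 x2 * B x3 x4 x5 * Q x0 x3 * Q x1 x4 * Q x2 x5)

set_option maxRecDepth 100000 in
set_option maxHeartbeats 4000000 in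
lemma card_cnd : (Finset.univ.filter cnd).card = 432 := by decide

lemma card_not_cnd : (Finset.univ.filter (fun φ => ¬ cnd φ)).card = 288 := by
  have h := Finset.card_filter_add_card_filter_not
    (s := (Finset.univ : Finset (Equiv.Perm (Fin 6)))) (p := cnd)
  rw [card_cnd, Finset.card_univ, Fintype.card_perm, Fintype.card_fin] at h
  norm_num [Nat.factorial] at h
  omega

theorem contraction_formula_33 (n : ℕ) (A B : Fin n → Fin n → Fin n → ℝ)
    (hA : ∀ i j l, A i j l = A j i l ∧ A i j l = A i l j)
    (hB : ∀ i j l, B i j l = B j i l ∧ B i j l = B i l j)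
    (Q : Matrix (Fin n) (Fin n) ℝ) (hQsymm : Q.IsSymm) (hQpos : Q.PosDef) :
    (∑ v : Fin 6 → Fin n,
        Q (v 0) (v 1) * Q (v 2) (v 3) * Q (v 4) (v 5) *
          ((1 / 720 : ℝ) * ∑ φ : Equiv.Perm (Fin 6),
            A (v (φ 0)) (v (φ 1)) (v (φ 2)) * B (v (φ 3)) (v (φ 4)) (v (φ 5)))) =
      (3 / 5) * (∑ a : Fin n, ∑ b : Fin n, ∑ m : Fin n, ∑ c : Fin n, ∑ d : Fin n, ∑ e : Fin n,
          Q a b * A a b m * Q c d * B c d e * Q m e) +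
      (2 / 5) * (∑ a : Fin n, ∑ b : Fin n, ∑ c : Fin n, ∑ d : Fin n, ∑ e : Fin n, ∑ f : Fin n,
          A a b c * B d e f * Q a d * Q b e * Q c f) := by
  have hcl : ∀ φ : Equiv.Perm (Fin 6),
      ff n A B Q ⇑φ = if cnd φ then ff n A B Q id else ff n A B Q c2f := by
    intro φ
    by_cases hc : cnd φ
    · rw [if_pos hc]; exact classify_pos n A B hA hB Q hQsymm φ hc
    · rw [if_neg hc]; exact classify_neg n A B hA hB Q hQsymm φ hc
  have e1 : ∀ v : Fin 6 → Fin n,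
      Q (v 0) (v 1) * Q (v 2) (v 3) * Q (v 4) (v 5) *
          ((1 / 720 : ℝ) * ∑ φ : Equiv.Perm (Fin 6),
            A (v (φ 0)) (v (φ 1)) (v (φ 2)) * B (v (φ 3)) (v (φ 4)) (v (φ 5))) =
      ∑ φ : Equiv.Perm (Fin 6), (1 / 720 : ℝ) *
          (Q (v 0) (v 1) * Q (v 2) (v 3) * Q (v 4) (v 5) *
            (A (v (φ 0)) (v (φ 1)) (v (φ 2)) * B (v (φ 3)) (v (φ 4)) (v (φ 5)))) := by
    intro v
    rw [Finset.mul_sum, Finset.mul_sum]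
    apply Finset.sum_congr rfl
    intro φ _
    ring
  rw [Finset.sum_congr rfl (fun v _ => e1 v), Finset.sum_comm]
  have e2 : ∀ φ : Equiv.Perm (Fin 6),
      (∑ v : Fin 6 → Fin n, (1 / 720 : ℝ) *
          (Q (v 0) (v 1) * Q (v 2) (v 3) * Q (v 4) (v 5) *
            (A (v (φ 0)) (v (φ 1)) (v (φ 2)) * B (v (φ 3)) (v (φ 4)) (v (φ 5))))) =
      if cnd φ then (1 / 720 : ℝ) * ff n A B Q id else (1 / 720 : ℝ) * ff n A B Q c2f := by
    intro φ
    rw [← Finset.mul_sum]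
    have hff : (∑ v : Fin 6 → Fin n,
        Q (v 0) (v 1) * Q (v 2) (v 3) * Q (v 4) (v 5) *
          (A (v (φ 0)) (v (φ 1)) (v (φ 2)) * B (v (φ 3)) (v (φ 4)) (v (φ 5)))) =
        ff n A B Q ⇑φ := rfl
    rw [hff, hcl φ, apply_ite (fun x : ℝ => (1 / 720 : ℝ) * x)]
  rw [Finset.sum_congr rfl (fun φ _ => e2 φ), Finset.sum_ite, Finset.sum_const,
    Finset.sum_const, card_cnd, card_not_cnd, feval1 n A B Q hB, feval2 n A B Q,
    nsmul_eq_mul, nsmul_eq_mul]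
  push_cast
  ring
end
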